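/- arXiv:2312.15445 — 3 statements merged into one kernel-verified Lean document; each statement's English description precedes it below -/
import Mathlib

section
/- For k = 2, a = 1 (so that the exponent correction N_{a+1}+⋯+N_{k−1} is empty and equals 0), the identity ∑_{N₁≥0} q^{N₁(N₁+1)/2} (−q;q)_{N₁−1}(1+q^{N₁}) / (q;q)_{N₁} = (−q;q)_∞ (q, q³, q⁴; q⁴)_∞ / (q;q)_∞ holds. -/
open PowerSeries

/-- The infinite sum ∑_{i≥0} c i of power series, assuming (as holds in all uses below)
that the order of c i tends to infinity, realized coefficientwise. -/
noncomputable def seriesSum (c : ℕ → PowerSeries ℚ) : PowerSeries ℚ :=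
  PowerSeries.mk fun n =>
    PowerSeries.coeff (R := ℚ) n (∑ i ∈ Finset.range (n + 1), c i)

/-- The infinite product ∏_{i≥0} f i of power series, assuming (as holds in all uses
below) that f i = 1 + (terms of order > i), realized coefficientwise. -/
noncomputable def seriesProd (f : ℕ → PowerSeries ℚ) : PowerSeries ℚ :=
  PowerSeries.mk fun n =>
    PowerSeries.coeff (R := ℚ) n (∏ i ∈ Finset.range (n + 1), f i)

/-- (−q;q)_N = ∏_{i=1}^{N} (1 + qⁱ). -/
noncomputable def pochNeg (N : ℕ) : PowerSeries ℚ :=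
  ∏ i ∈ Finset.range N, (1 + (PowerSeries.X : PowerSeries ℚ) ^ (i + 1))

/-- (q;q)_N = ∏_{i=1}^{N} (1 − qⁱ). -/
noncomputable def pochPos (N : ℕ) : PowerSeries ℚ :=
  ∏ i ∈ Finset.range N, (1 - (PowerSeries.X : PowerSeries ℚ) ^ (i + 1))

/-- (q²;q²)_N = ∏_{i=1}^{N} (1 − q^{2i}). -/
noncomputable def pochPos2 (N : ℕ) : PowerSeries ℚ :=
  ∏ i ∈ Finset.range N, (1 - (PowerSeries.X : PowerSeries ℚ) ^ (2 * (i + 1)))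

open Finset

local notation "XX" => (PowerSeries.X : PowerSeries ℚ)
local notation "cf" => PowerSeries.coeff (R := ℚ)

namespace CSS


/-! ### basic constant coefficient and inverse lemmas -/

lemma cc_one_sub (k : ℕ) (hk : k ≠ 0) :
    constantCoeff (R := ℚ) (1 - XX ^ k) = 1 := by
  simp [map_sub, map_pow, constantCoeff_X, zero_pow hk]

lemma cc_one_add (k : ℕ) (hk : k ≠ 0) :
    constantCoeff (R := ℚ) (1 + XX ^ k) = 1 := by
  simp [map_add, map_pow, constantCoeff_X, zero_pow hk]

lemma cc_prod_sub (e : ℕ → ℕ) (he : ∀ i, e i ≠ 0) (s : Finset ℕ) :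
    constantCoeff (R := ℚ) (∏ i ∈ s, (1 - XX ^ (e i))) = 1 := by
  rw [map_prod]
  rw [Finset.prod_congr rfl (fun i _ => cc_one_sub (e i) (he i))]
  simp

lemma cc_prod_add (e : ℕ → ℕ) (he : ∀ i, e i ≠ 0) (s : Finset ℕ) :
    constantCoeff (R := ℚ) (∏ i ∈ s, (1 + XX ^ (e i))) = 1 := by
  rw [map_prod]
  rw [Finset.prod_congr rfl (fun i _ => cc_one_add (e i) (he i))]
  simp

lemma cc_pochPos (N : ℕ) : constantCoeff (R := ℚ) (pochPos N) = 1 :=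
  cc_prod_sub _ (fun i => by omega) _

lemma cc_pochPos2 (N : ℕ) : constantCoeff (R := ℚ) (pochPos2 N) = 1 :=
  cc_prod_sub _ (fun i => by omega) _

lemma cc_pochNeg (N : ℕ) : constantCoeff (R := ℚ) (pochNeg N) = 1 :=
  cc_prod_add _ (fun i => by omega) _

lemma eq_inv_of_mul_one {a b : PowerSeries ℚ} (ha : constantCoeff (R := ℚ) a = 1)
    (h : b * a = 1) : b = a⁻¹ :=
  (PowerSeries.eq_inv_iff_mul_eq_one (by rw [ha]; norm_num)).2 h

lemma mul_inv_one {a : PowerSeries ℚ} (ha : constantCoeff (R := ℚ) a = 1) : a * a⁻¹ = 1 :=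
  PowerSeries.mul_inv_cancel a (by rw [ha]; norm_num)

lemma inv_mul_one {a : PowerSeries ℚ} (ha : constantCoeff (R := ℚ) a = 1) : a⁻¹ * a = 1 :=
  PowerSeries.inv_mul_cancel a (by rw [ha]; norm_num)

/-- (u*w)⁻¹ * w = u⁻¹ when constant coeffs are 1. -/
lemma inv_mul_peel {u w : PowerSeries ℚ} (hu : constantCoeff (R := ℚ) u = 1)
    (hw : constantCoeff (R := ℚ) w = 1) : (u * w)⁻¹ * w = u⁻¹ := by
  apply eq_inv_of_mul_one hu
  have huw : constantCoeff (R := ℚ) (u * w) = 1 := by rw [map_mul, hu, hw, one_mul]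
  calc (u * w)⁻¹ * w * u = (u * w)⁻¹ * (u * w) := by ring
  _ = 1 := inv_mul_one huw



/-- order condition: the `m`-th term has order at least `m`. -/
def Ord (c : ℕ → PowerSeries ℚ) : Prop := ∀ ⦃m n : ℕ⦄, n < m → cf n (c m) = 0

lemma coeff_seriesSum (c : ℕ → PowerSeries ℚ) (n : ℕ) :
    cf n (seriesSum c) = cf n (∑ i ∈ range (n+1), c i) := by
  simp [seriesSum, coeff_mk]

lemma coeff_sum_stable {c : ℕ → PowerSeries ℚ} (h : Ord c) {n m : ℕ} (hm : n < m) :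
    cf n (∑ i ∈ range m, c i) = cf n (seriesSum c) := by
  rw [coeff_seriesSum, map_sum, map_sum]
  apply (Finset.sum_subset (Finset.range_subset_range.2 hm) ?_).symm
  intro i _ hi
  exact h (by simpa using hi)

lemma coeff_seriesSum_eq {c : ℕ → PowerSeries ℚ} (h : Ord c) {n m : ℕ} (hm : n < m) :
    cf n (seriesSum c) = cf n (∑ i ∈ range m, c i) := (coeff_sum_stable h hm).symm

lemma seriesSum_add (a b : ℕ → PowerSeries ℚ) :
    seriesSum (fun m => a m + b m) = seriesSum a + seriesSum b := by
  ext n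
  simp [seriesSum, coeff_mk, Finset.sum_add_distrib]

/-- multiplying by a fixed series commutes with truncation of the sum -/
lemma coeff_mul_seriesSum {c : ℕ → PowerSeries ℚ} (h : Ord c) (W : PowerSeries ℚ) (n : ℕ) :
    cf n (W * seriesSum c) = cf n (W * ∑ i ∈ range (n+1), c i) := by
  rw [coeff_mul, coeff_mul]
  apply Finset.sum_congr rfl
  intro p hp
  have hp2 : p.2 ≤ n := Finset.HasAntidiagonal.antidiagonal.snd_le hp
  congr 1
  rw [coeff_seriesSum_eq h (Nat.lt_succ_of_le hp2)]

/-- shifting the summation index corresponds to multiplication by a power of X -/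
lemma seriesSum_shift {c : ℕ → PowerSeries ℚ} (h : Ord c) (e : ℕ) (he : 1 ≤ e) :
    seriesSum (fun m => if m = 0 then 0 else XX ^ e * c (m-1)) = XX ^ e * seriesSum c := by
  ext n
  rw [coeff_seriesSum]
  have : (∑ i ∈ range (n+1), (if i = 0 then 0 else XX ^ e * c (i-1)))
      = XX ^ e * ∑ i ∈ range n, c i := by
    rw [Finset.sum_range_succ']
    simp [Finset.mul_sum]
  rw [this]
  rcases le_or_gt e n with hle | hlt
  · rw [coeff_X_pow_mul' , coeff_X_pow_mul', if_pos hle, if_pos hle]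
    rcases Nat.eq_zero_or_pos n with rfl | hn
    · omega
    · rw [coeff_sum_stable h (by omega)]
  · rw [coeff_X_pow_mul', coeff_X_pow_mul', if_neg (by omega), if_neg (by omega)]

/-! ### seriesProd lemmas -/

/-- the `i`-th factor is `1` + terms of order `> i` -/
def OrdP (f : ℕ → PowerSeries ℚ) : Prop := ∀ i, ∀ b ≤ i, cf b (f i - 1) = 0

lemma coeff_mul_eq_self {u : PowerSeries ℚ} {n : ℕ}
    (hh : ∀ b ≤ n, cf b (u - 1) = 0) (g : PowerSeries ℚ) :
    cf n (g * u) = cf n g := by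
  have : g * u = g + g * (u - 1) := by ring
  rw [this, map_add, add_eq_left, coeff_mul]
  apply Finset.sum_eq_zero
  intro p hp
  rw [hh p.2 (Finset.HasAntidiagonal.antidiagonal.snd_le hp), mul_zero]

lemma coeff_seriesProd (f : ℕ → PowerSeries ℚ) (n : ℕ) :
    cf n (seriesProd f) = cf n (∏ i ∈ range (n+1), f i) := by
  simp [seriesProd, coeff_mk]

lemma coeff_prod_stable {f : ℕ → PowerSeries ℚ} (hf : OrdP f) {n m : ℕ} (hm : n < m) :
    cf n (∏ i ∈ range m, f i) = cf n (∏ i ∈ range (n+1), f i) := by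
  induction m with
  | zero => omega
  | succ m ih =>
      rcases Nat.lt_or_ge n m with h1 | h1
      · rw [Finset.prod_range_succ,
          coeff_mul_eq_self (fun b hb => hf m b (by omega)) _, ih h1]
      · have : m = n := by omega
        subst this; rfl

lemma coeff_seriesProd_stable {f : ℕ → PowerSeries ℚ} (hf : OrdP f) {n m : ℕ} (hm : n < m) :
    cf n (∏ i ∈ range m, f i) = cf n (seriesProd f) := by
  rw [coeff_seriesProd, coeff_prod_stable hf hm]

lemma coeff_mul_seriesProd {f : ℕ → PowerSeries ℚ} (hf : OrdP f) (W : PowerSeries ℚ) (n : ℕ) :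
    cf n (W * seriesProd f) = cf n (W * ∏ i ∈ range (n+1), f i) := by
  rw [coeff_mul, coeff_mul]
  apply Finset.sum_congr rfl
  intro p hp
  have hp2 : p.2 ≤ n := Finset.HasAntidiagonal.antidiagonal.snd_le hp
  congr 1
  rw [← coeff_seriesProd_stable hf (Nat.lt_succ_of_le hp2), coeff_prod_stable hf (Nat.lt_succ_of_le hp2)]

/-- factors of high order can be filtered out of a finite product, in presence of a
multiplier `W`. -/
lemma coeff_mul_prod_filter {n : ℕ} (f : ℕ → PowerSeries ℚ) (p : ℕ → Prop) [DecidablePred p]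
    (s : Finset ℕ) (h : ∀ i ∈ s, ¬ p i → ∀ b ≤ n, cf b (f i - 1) = 0) (W : PowerSeries ℚ) :
    cf n (W * ∏ i ∈ s, f i) = cf n (W * ∏ i ∈ s.filter p, f i) := by
  induction s using Finset.induction_on generalizing W with
  | empty => simp
  | @insert a s ha ih =>
      rw [Finset.prod_insert ha, ← mul_assoc]
      rw [ih (fun i hi => h i (Finset.mem_insert_of_mem hi)) (W * f a)]
      by_cases hpa : p a
      · rw [Finset.filter_insert, if_pos hpa,
          Finset.prod_insert (fun hc => ha (Finset.mem_of_mem_filter a hc)), ← mul_assoc]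
      · rw [Finset.filter_insert, if_neg hpa]
        rw [mul_comm W (f a), mul_assoc, mul_comm (f a) _, coeff_mul_eq_self
          (h a (Finset.mem_insert_self a s) hpa)]



/-! ### triangular numbers -/

def T (n : ℕ) : ℕ := n * (n+1) / 2

lemma T_mul_two (n : ℕ) : T n * 2 = n * (n+1) :=
  Nat.div_mul_cancel (Nat.even_mul_succ_self n).two_dvd

lemma two_T (n : ℕ) : 2 * T n = n * n + n := by
  have h1 := T_mul_two n
  have h2 : n * (n+1) = n*n + n := by ring
  omega

lemma T_zero : T 0 = 0 := rfl

lemma T_succ (n : ℕ) : T (n+1) = T n + (n+1) := by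
  have h1 := two_T n
  have h2 := two_T (n+1)
  have h3 : (n+1)*(n+1) = n*n + 2*n + 1 := by ring
  omega

lemma T_add (j m : ℕ) : T (j + m) = T j + T m + j * m := by
  have h1 := two_T j
  have h2 := two_T m
  have h3 := two_T (j + m)
  have h4 : (j+m)*(j+m) = j*j + m*m + 2*(j*m) := by ring
  omega

lemma T_ge (m : ℕ) : m ≤ T m := by
  rcases m with _ | m
  · simp [T]
  · have h1 := two_T (m+1)
    have h2 : (m+1)*(m+1) = m*m + 2*m + 1 := by ring
    have h3 : 0 ≤ m*m := Nat.zero_le _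
    omega

/-! ### vanishing of low coefficients -/

lemma coeff_X_pow_mul_low {e n : ℕ} (h : n < e) (g : PowerSeries ℚ) :
    cf n (XX ^ e * g) = 0 := by
  rw [coeff_X_pow_mul', if_neg (by omega)]

lemma coeff_sub_one_pow_low {k b : ℕ} (h : b < k) :
    cf b ((1 - XX ^ k : PowerSeries ℚ) - 1) = 0 := by
  have : (1 - XX ^ k : PowerSeries ℚ) - 1 = -(XX ^ k) := by ring
  rw [this, map_neg, coeff_X_pow, if_neg (by omega), neg_zero]

lemma coeff_add_one_pow_low {k b : ℕ} (h : b < k) :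
    cf b ((1 + XX ^ k : PowerSeries ℚ) - 1) = 0 := by
  have : (1 + XX ^ k : PowerSeries ℚ) - 1 = XX ^ k := by ring
  rw [this, coeff_X_pow, if_neg (by omega)]

lemma ordP_sub {e : ℕ → ℕ} (he : ∀ i, i < e i) :
    OrdP (fun i => 1 - XX ^ (e i)) := fun i b hb =>
  coeff_sub_one_pow_low (lt_of_le_of_lt hb (he i))

lemma ordP_add {e : ℕ → ℕ} (he : ∀ i, i < e i) :
    OrdP (fun i => 1 + XX ^ (e i)) := fun i b hb =>
  coeff_add_one_pow_low (lt_of_le_of_lt hb (he i))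

/-! ### master lemma: coefficients of a (multiplied) seriesProd of (1 - X^{e i}) -/

def Eset (e : ℕ → ℕ) (n : ℕ) : Finset ℕ :=
  ((Finset.range (n+1)).filter (fun i => e i ≤ n)).image e

lemma master (e : ℕ → ℕ) (he : ∀ i, i < e i) (hinj : ∀ i j, e i = e j → i = j)
    (n : ℕ) (W : PowerSeries ℚ) :
    cf n (W * seriesProd (fun i => 1 - XX ^ (e i)))
      = cf n (W * ∏ k ∈ Eset e n, (1 - XX ^ k)) := by
  rw [coeff_mul_seriesProd (ordP_sub he) W n]
  rw [coeff_mul_prod_filter (fun i => 1 - XX ^ (e i)) (fun i => e i ≤ n) (range (n+1))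
    (fun i _ hi b hb => coeff_sub_one_pow_low (by omega)) W]
  congr 2
  rw [Eset, Finset.prod_image (fun i _ j _ h => hinj i j h)]

/-! ### identification of the exponent sets -/

lemma Eset_A (n : ℕ) : Eset (fun i => i + 1) n
    = (range (n+1)).filter (fun k => 1 ≤ k) := by
  ext k
  simp only [Eset, Finset.mem_image, Finset.mem_filter, Finset.mem_range]
  constructor
  · rintro ⟨i, ⟨hi, hik⟩, rfl⟩; omega
  · rintro ⟨hk, h1⟩; exact ⟨k - 1, ⟨by omega, by omega⟩, by omega⟩

lemma Eset_B (n : ℕ) : Eset (fun i => 4*i + 1) n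
    = (range (n+1)).filter (fun k => k % 4 = 1) := by
  ext k
  simp only [Eset, Finset.mem_image, Finset.mem_filter, Finset.mem_range]
  constructor
  · rintro ⟨i, ⟨hi, hik⟩, rfl⟩; omega
  · rintro ⟨hk, h1⟩; exact ⟨(k - 1) / 4, ⟨by omega, by omega⟩, by omega⟩

lemma Eset_C (n : ℕ) : Eset (fun i => 4*i + 3) n
    = (range (n+1)).filter (fun k => k % 4 = 3) := by
  ext k
  simp only [Eset, Finset.mem_image, Finset.mem_filter, Finset.mem_range]
  constructor
  · rintro ⟨i, ⟨hi, hik⟩, rfl⟩; omega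
  · rintro ⟨hk, h1⟩; exact ⟨(k - 3) / 4, ⟨by omega, by omega⟩, by omega⟩

lemma Eset_D (n : ℕ) : Eset (fun i => 4*i + 4) n
    = (range (n+1)).filter (fun k => k % 4 = 0 ∧ 1 ≤ k) := by
  ext k
  simp only [Eset, Finset.mem_image, Finset.mem_filter, Finset.mem_range]
  constructor
  · rintro ⟨i, ⟨hi, hik⟩, rfl⟩; omega
  · rintro ⟨hk, h1, h2⟩; exact ⟨(k - 4) / 4, ⟨by omega, by omega⟩, by omega⟩

lemma Eset_E (n : ℕ) : Eset (fun i => 4*i + 2) n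
    = (range (n+1)).filter (fun k => k % 4 = 2) := by
  ext k
  simp only [Eset, Finset.mem_image, Finset.mem_filter, Finset.mem_range]
  constructor
  · rintro ⟨i, ⟨hi, hik⟩, rfl⟩; omega
  · rintro ⟨hk, h1⟩; exact ⟨(k - 2) / 4, ⟨by omega, by omega⟩, by omega⟩

lemma Eset_G (n : ℕ) : Eset (fun i => 2*i + 2) n
    = (range (n+1)).filter (fun k => k % 2 = 0 ∧ 1 ≤ k) := by
  ext k
  simp only [Eset, Finset.mem_image, Finset.mem_filter, Finset.mem_range]
  constructor
  · rintro ⟨i, ⟨hi, hik⟩, rfl⟩; omega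
  · rintro ⟨hk, h1, h2⟩; exact ⟨(k - 2) / 2, ⟨by omega, by omega⟩, by omega⟩



lemma cc_seriesProd (f : ℕ → PowerSeries ℚ) :
    constantCoeff (R := ℚ) (seriesProd f) = constantCoeff (R := ℚ) (f 0) := by
  rw [← coeff_zero_eq_constantCoeff, coeff_seriesProd]
  simp

lemma cc_seriesProd_sub (e : ℕ → ℕ) (he : e 0 ≠ 0) :
    constantCoeff (R := ℚ) (seriesProd (fun i => 1 - XX ^ (e i))) = 1 := by
  rw [cc_seriesProd]; exact cc_one_sub _ he

lemma cc_seriesProd_add (e : ℕ → ℕ) (he : e 0 ≠ 0) :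
    constantCoeff (R := ℚ) (seriesProd (fun i => 1 + XX ^ (e i))) = 1 := by
  rw [cc_seriesProd]; exact cc_one_add _ he

/-- splitting (q;q)_∞ into residue classes mod 4 -/
lemma R1 : seriesProd (fun i => 1 - XX ^ (i+1)) =
    seriesProd (fun i => 1 - XX ^ (4*i+1)) * seriesProd (fun i => 1 - XX ^ (4*i+3)) *
    seriesProd (fun i => 1 - XX ^ (4*i+4)) * seriesProd (fun i => 1 - XX ^ (4*i+2)) := by
  ext n
  have hA := master (fun i => i+1) (show ∀ i, i < i+1 by intro i; omega) (show ∀ i j, i+1 = j+1 → i = j by intro i j h; omega) n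
  have hB := master (fun i => 4*i+1) (show ∀ i, i < 4*i+1 by intro i; omega) (show ∀ i j, 4*i+1 = 4*j+1 → i = j by intro i j h; omega) n
  have hC := master (fun i => 4*i+3) (show ∀ i, i < 4*i+3 by intro i; omega) (show ∀ i j, 4*i+3 = 4*j+3 → i = j by intro i j h; omega) n
  have hD := master (fun i => 4*i+4) (show ∀ i, i < 4*i+4 by intro i; omega) (show ∀ i j, 4*i+4 = 4*j+4 → i = j by intro i j h; omega) n
  have hE := master (fun i => 4*i+2) (show ∀ i, i < 4*i+2 by intro i; omega) (show ∀ i j, 4*i+2 = 4*j+2 → i = j by intro i j h; omega) n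
  set B := seriesProd (fun i => 1 - XX ^ (4*i+1))
  set C := seriesProd (fun i => 1 - XX ^ (4*i+3))
  set D := seriesProd (fun i => 1 - XX ^ (4*i+4))
  set E := seriesProd (fun i => 1 - XX ^ (4*i+2))
  set QB := ∏ k ∈ Eset (fun i => 4*i+1) n, (1 - XX ^ k) with hQB
  set QC := ∏ k ∈ Eset (fun i => 4*i+3) n, (1 - XX ^ k) with hQC
  set QD := ∏ k ∈ Eset (fun i => 4*i+4) n, (1 - XX ^ k) with hQD
  set QE := ∏ k ∈ Eset (fun i => 4*i+2) n, (1 - XX ^ k) with hQE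
  have step : cf n (B * C * D * E) = cf n (QB * QC * QD * QE) := by
    calc cf n (B * C * D * E) = cf n ((B * C * D) * E) := by ring_nf
    _ = cf n ((B * C * D) * QE) := hE ((B * C * D))
    _ = cf n ((B * C * QE) * D) := by ring_nf
    _ = cf n ((B * C * QE) * QD) := hD _
    _ = cf n ((B * QE * QD) * C) := by ring_nf
    _ = cf n ((B * QE * QD) * QC) := hC _
    _ = cf n ((QE * QD * QC) * B) := by ring_nf
    _ = cf n ((QE * QD * QC) * QB) := hB _
    _ = cf n (QB * QC * QD * QE) := by ring_nf
  rw [step]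
  have lhs : cf n (seriesProd (fun i => 1 - XX ^ (i+1)))
      = cf n (∏ k ∈ Eset (fun i => i+1) n, (1 - XX ^ k)) := by
    have := hA 1
    rwa [one_mul, one_mul] at this
  rw [lhs]
  congr 1
  rw [hQB, hQC, hQD, hQE, Eset_A, Eset_B, Eset_C, Eset_D, Eset_E]
  have d1 : Disjoint ((range (n+1)).filter (fun k => k % 4 = 1))
      ((range (n+1)).filter (fun k => k % 4 = 3)) :=
    Finset.disjoint_filter.mpr (fun k _ h1 h2 => by omega)
  have d2 : Disjoint (((range (n+1)).filter (fun k => k % 4 = 1)) ∪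
        ((range (n+1)).filter (fun k => k % 4 = 3)))
      ((range (n+1)).filter (fun k => k % 4 = 0 ∧ 1 ≤ k)) := by
    rw [Finset.disjoint_left]
    intro k hk hk'
    simp only [Finset.mem_union, Finset.mem_filter] at hk hk'
    omega
  have d3 : Disjoint ((((range (n+1)).filter (fun k => k % 4 = 1)) ∪
        ((range (n+1)).filter (fun k => k % 4 = 3))) ∪
        ((range (n+1)).filter (fun k => k % 4 = 0 ∧ 1 ≤ k)))
      ((range (n+1)).filter (fun k => k % 4 = 2)) := by
    rw [Finset.disjoint_left]
    intro k hk hk'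
    simp only [Finset.mem_union, Finset.mem_filter] at hk hk'
    omega
  rw [← Finset.prod_union d1, ← Finset.prod_union d2, ← Finset.prod_union d3]
  apply Finset.prod_congr _ (fun _ _ => rfl)
  rw [← Finset.filter_or, ← Finset.filter_or, ← Finset.filter_or]
  apply Finset.filter_congr
  intro k _
  constructor
  · intro h; omega
  · intro h; omega

/-- splitting (q²;q²)_∞ into classes mod 4 -/
lemma Gsplit : seriesProd (fun i => 1 - XX ^ (2*i+2)) =
    seriesProd (fun i => 1 - XX ^ (4*i+2)) * seriesProd (fun i => 1 - XX ^ (4*i+4)) := by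
  ext n
  have hG := master (fun i => 2*i+2) (show ∀ i, i < 2*i+2 by intro i; omega) (show ∀ i j, 2*i+2 = 2*j+2 → i = j by intro i j h; omega) n
  have hD := master (fun i => 4*i+4) (show ∀ i, i < 4*i+4 by intro i; omega) (show ∀ i j, 4*i+4 = 4*j+4 → i = j by intro i j h; omega) n
  have hE := master (fun i => 4*i+2) (show ∀ i, i < 4*i+2 by intro i; omega) (show ∀ i j, 4*i+2 = 4*j+2 → i = j by intro i j h; omega) n
  set D := seriesProd (fun i => 1 - XX ^ (4*i+4))
  set E := seriesProd (fun i => 1 - XX ^ (4*i+2))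
  set QD := ∏ k ∈ Eset (fun i => 4*i+4) n, (1 - XX ^ k) with hQD
  set QE := ∏ k ∈ Eset (fun i => 4*i+2) n, (1 - XX ^ k) with hQE
  have lhs : cf n (seriesProd (fun i => 1 - XX ^ (2*i+2)))
      = cf n (∏ k ∈ Eset (fun i => 2*i+2) n, (1 - XX ^ k)) := by
    have := hG 1
    rwa [one_mul, one_mul] at this
  have rhs : cf n (E * D) = cf n (QE * QD) := by
    calc cf n (E * D) = cf n (E * QD) := hD E
    _ = cf n (QD * E) := by ring_nf
    _ = cf n (QD * QE) := hE QD
    _ = cf n (QE * QD) := by ring_nf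
  rw [lhs, rhs]
  congr 1
  rw [hQD, hQE, Eset_D, Eset_E, Eset_G]
  have d1 : Disjoint ((range (n+1)).filter (fun k => k % 4 = 2))
      ((range (n+1)).filter (fun k => k % 4 = 0 ∧ 1 ≤ k)) :=
    Finset.disjoint_filter.mpr (fun k _ h1 h2 => by omega)
  rw [← Finset.prod_union d1, ← Finset.filter_or]
  apply Finset.prod_congr _ (fun _ _ => rfl)
  apply Finset.filter_congr
  intro k _
  constructor
  · intro h; omega
  · intro h; omega

/-- pairing (1+x)(1-x): (−q²;q²)_∞ (q²;q²)_∞ = (q⁴;q⁴)_∞ -/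
lemma FG : seriesProd (fun i => 1 + XX ^ (2*(i+1))) * seriesProd (fun i => 1 - XX ^ (2*i+2)) =
    seriesProd (fun i => 1 - XX ^ (4*i+4)) := by
  ext n
  set F := seriesProd (fun i => 1 + XX ^ (2*(i+1)))
  calc cf n (F * seriesProd (fun i => 1 - XX ^ (2*i+2)))
      = cf n (F * ∏ i ∈ range (n+1), (1 - XX ^ (2*i+2))) :=
        coeff_mul_seriesProd (ordP_sub (fun i => by omega)) F n
    _ = cf n ((∏ i ∈ range (n+1), (1 - XX ^ (2*i+2))) * F) := by rw [mul_comm]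
    _ = cf n ((∏ i ∈ range (n+1), (1 - XX ^ (2*i+2))) *
          ∏ i ∈ range (n+1), (1 + XX ^ (2*(i+1)))) :=
        coeff_mul_seriesProd (ordP_add (fun i => by omega)) _ n
    _ = cf n (∏ i ∈ range (n+1), ((1 - XX ^ (2*i+2)) * (1 + XX ^ (2*(i+1))))) := by
        rw [Finset.prod_mul_distrib]
    _ = cf n (∏ i ∈ range (n+1), (1 - XX ^ (4*i+4))) := by
        congr 1
        apply Finset.prod_congr rfl
        intro i _
        have h1 : 2*(i+1) = 2*i+2 := by ring
        have h2 : XX ^ (2*i+2) * XX ^ (2*i+2) = XX ^ (4*i+4) := by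
          rw [← pow_add]; congr 1; omega
        rw [h1]
        calc (1 - XX ^ (2*i+2)) * (1 + XX ^ (2*i+2))
            = 1 - XX ^ (2*i+2) * XX ^ (2*i+2) := by ring
        _ = 1 - XX ^ (4*i+4) := by rw [h2]
    _ = cf n (seriesProd (fun i => 1 - XX ^ (4*i+4))) := (coeff_seriesProd _ n).symm

/-- Euler: (q²;q⁴)_∞ (−q²;q²)_∞ = 1 -/
lemma EF : seriesProd (fun i => 1 - XX ^ (4*i+2)) * seriesProd (fun i => 1 + XX ^ (2*(i+1))) = 1 := by
  have hD0 : (seriesProd (fun i => 1 - XX ^ (4*i+4))) ≠ 0 := by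
    intro h
    have := cc_seriesProd_sub (fun i => 4*i+4) (by simp)
    rw [h, map_zero] at this
    norm_num at this
  apply mul_right_cancel₀ hD0
  rw [one_mul]
  calc seriesProd (fun i => 1 - XX ^ (4*i+2)) * seriesProd (fun i => 1 + XX ^ (2*(i+1))) *
        seriesProd (fun i => 1 - XX ^ (4*i+4))
      = seriesProd (fun i => 1 + XX ^ (2*(i+1))) *
        (seriesProd (fun i => 1 - XX ^ (4*i+2)) * seriesProd (fun i => 1 - XX ^ (4*i+4))) := by ring
    _ = seriesProd (fun i => 1 + XX ^ (2*(i+1))) * seriesProd (fun i => 1 - XX ^ (2*i+2)) := by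
        rw [← Gsplit]
    _ = seriesProd (fun i => 1 - XX ^ (4*i+4)) := FG

/-- the right-hand side of the theorem equals (−q;q)_∞ (−q²;q²)_∞ -/
lemma RHS_eq :
    seriesProd (fun i => 1 + XX ^ (i + 1)) *
        seriesProd (fun i => 1 - XX ^ (4 * i + 1)) *
        seriesProd (fun i => 1 - XX ^ (4 * i + 3)) *
        seriesProd (fun i => 1 - XX ^ (4 * i + 4)) *
        (seriesProd (fun i => 1 - XX ^ (i + 1)))⁻¹
    = seriesProd (fun i => 1 + XX ^ (i + 1)) * seriesProd (fun i => 1 + XX ^ (2*(i+1))) := by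
  set A := seriesProd (fun i => 1 + XX ^ (i + 1))
  set B := seriesProd (fun i => 1 - XX ^ (4 * i + 1))
  set C := seriesProd (fun i => 1 - XX ^ (4 * i + 3))
  set D := seriesProd (fun i => 1 - XX ^ (4 * i + 4))
  set E := seriesProd (fun i => 1 - XX ^ (4 * i + 2))
  set F := seriesProd (fun i => 1 + XX ^ (2*(i+1)))
  set P := seriesProd (fun i => 1 - XX ^ (i + 1))
  have hBCD : B * C * D = P * F := by
    calc B * C * D = B * C * D * (E * F) := by rw [EF]; ring
    _ = (B * C * D * E) * F := by ring
    _ = P * F := by rw [← R1]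
  have hP : P * P⁻¹ = 1 := mul_inv_one (cc_seriesProd_sub (fun i => i+1) (by simp))
  calc A * B * C * D * P⁻¹ = A * (B * C * D) * P⁻¹ := by ring
  _ = A * (P * F) * P⁻¹ := by rw [hBCD]
  _ = A * F * (P * P⁻¹) := by ring
  _ = A * F := by rw [hP, mul_one]



noncomputable def pPos (d N : ℕ) : PowerSeries ℚ := ∏ i ∈ range N, (1 - XX ^ (d*(i+1)))
noncomputable def pNeg (d N : ℕ) : PowerSeries ℚ := ∏ i ∈ range N, (1 + XX ^ (d*(i+1)))
noncomputable def tE (d j m : ℕ) : PowerSeries ℚ := XX ^ (d*(T m + m*j)) * (pPos d m)⁻¹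
noncomputable def SE (d j : ℕ) : PowerSeries ℚ := seriesSum (tE d j)

lemma pPos_zero (d : ℕ) : pPos d 0 = 1 := by simp [pPos]

lemma pPos_succ (d m : ℕ) : pPos d (m+1) = pPos d m * (1 - XX ^ (d*(m+1))) :=
  Finset.prod_range_succ _ _

lemma pNeg_succ (d m : ℕ) : pNeg d (m+1) = pNeg d m * (1 + XX ^ (d*(m+1))) :=
  Finset.prod_range_succ _ _

lemma cc_pPos (d N : ℕ) (hd : 1 ≤ d) : constantCoeff (R := ℚ) (pPos d N) = 1 :=
  cc_prod_sub _ (fun i => by positivity) _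

lemma inv_one' : (1 : PowerSeries ℚ)⁻¹ = 1 :=
  (eq_inv_of_mul_one (map_one _) (one_mul 1)).symm

lemma tE_zero (d j : ℕ) : tE d j 0 = 1 := by
  simp [tE, T_zero, pPos_zero, inv_one']

lemma ord_tE (d j : ℕ) (hd : 1 ≤ d) : Ord (tE d j) := by
  intro m n h
  apply coeff_X_pow_mul_low
  have h1 := T_ge m
  have h2 : T m + m*j ≤ d*(T m + m*j) := Nat.le_mul_of_pos_left _ (by omega)
  omega

lemma tE_rec (d j m : ℕ) (hd : 1 ≤ d) :
    tE d j m = tE d (j+1) m + (if m = 0 then 0 else XX ^ (d*(j+1)) * tE d (j+1) (m-1)) := by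
  rcases m with _ | m
  · simp [tE, T_zero]
  · rw [if_neg (Nat.succ_ne_zero m)]
    have hu : constantCoeff (R := ℚ) (pPos d m) = 1 := cc_pPos d m hd
    have hw : constantCoeff (R := ℚ) (1 - XX ^ (d*(m+1))) = 1 := cc_one_sub _ (by positivity)
    have hinv := inv_mul_peel hu hw
    have e2 : d*(T (m+1) + (m+1)*(j+1)) = d*(T (m+1) + (m+1)*j) + d*(m+1) := by ring
    have e3 : d*(T (m+1) + (m+1)*j) = d*(j+1) + d*(T m + m*(j+1)) := by
      rw [T_succ]; ring
    simp only [tE, Nat.add_sub_cancel]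
    rw [pPos_succ, e2, e3, pow_add, pow_add, ← hinv]
    ring

lemma SE_rec (d j : ℕ) (hd : 1 ≤ d) : SE d j = (1 + XX ^ (d*(j+1))) * SE d (j+1) := by
  have h1 : SE d j = seriesSum (fun m => tE d (j+1) m +
      (if m = 0 then 0 else XX ^ (d*(j+1)) * tE d (j+1) (m-1))) :=
    congrArg seriesSum (funext (fun m => tE_rec d j m hd))
  rw [h1, seriesSum_add, seriesSum_shift (ord_tE d (j+1) hd) _ (Nat.mul_pos (by omega) (Nat.succ_pos j))]
  show SE d (j+1) + XX ^ (d*(j+1)) * SE d (j+1) = (1 + XX ^ (d*(j+1))) * SE d (j+1)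
  ring

lemma pNeg_SE (d : ℕ) (hd : 1 ≤ d) : ∀ j, pNeg d j * SE d j = SE d 0 := by
  intro j
  induction j with
  | zero => simp [pNeg]
  | succ j ih =>
      rw [pNeg_succ]
      calc pNeg d j * (1 + XX ^ (d*(j+1))) * SE d (j+1)
          = pNeg d j * ((1 + XX ^ (d*(j+1))) * SE d (j+1)) := by ring
      _ = pNeg d j * SE d j := by rw [← SE_rec d j hd]
      _ = SE d 0 := ih

lemma coeff_SE_high (d : ℕ) (hd : 1 ≤ d) (n b : ℕ) (hb : b ≤ n) :
    cf b (SE d (n+1) - 1) = 0 := by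
  simp only [SE]
  rw [map_sub, coeff_seriesSum, Finset.sum_range_succ', map_add, map_sum, tE_zero]
  have : ∀ m ∈ range b, cf b (tE d (n+1) (m+1)) = 0 := by
    intro m _
    simp only [tE]
    apply coeff_X_pow_mul_low
    have h1 : n + 2 ≤ T (m+1) + (m+1)*(n+1) := by
      have := T_ge (m+1)
      have h2 : n + 1 ≤ (m+1)*(n+1) := Nat.le_mul_of_pos_left _ (by omega)
      omega
    have h3 : T (m+1) + (m+1)*(n+1) ≤ d * (T (m+1) + (m+1)*(n+1)) :=
      Nat.le_mul_of_pos_left _ (by omega)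
    omega
  rw [Finset.sum_congr rfl this]
  simp

lemma euler (d : ℕ) (hd : 1 ≤ d) : SE d 0 = seriesProd (fun i => 1 + XX ^ (d*(i+1))) := by
  ext n
  rw [← pNeg_SE d hd (n+1)]
  rw [coeff_mul_eq_self (coeff_SE_high d hd n) (pNeg d (n+1))]
  rw [coeff_seriesProd]
  rfl



noncomputable def qb (N j : ℕ) : PowerSeries ℚ :=
  pochPos N * (pochPos j)⁻¹ * (pochPos (N - j))⁻¹

lemma pochPos_zero : pochPos 0 = 1 := by simp [pochPos]

lemma pochPos_succ (m : ℕ) : pochPos (m+1) = pochPos m * (1 - XX ^ (m+1)) :=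
  Finset.prod_range_succ _ _

lemma pochNeg_zero : pochNeg 0 = 1 := by simp [pochNeg]

lemma pochNeg_succ (m : ℕ) : pochNeg (m+1) = pochNeg m * (1 + XX ^ (m+1)) :=
  Finset.prod_range_succ _ _

lemma pochPos_ne (N : ℕ) : pochPos N ≠ 0 := by
  intro h
  have := cc_pochPos N
  rw [h, map_zero] at this
  norm_num at this

lemma qb_zero (N : ℕ) : qb N 0 = 1 := by
  rw [qb, pochPos_zero, inv_one', Nat.sub_zero, mul_one]
  exact mul_inv_one (cc_pochPos N)

lemma qb_self (N : ℕ) : qb N N = 1 := by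
  rw [qb, Nat.sub_self, pochPos_zero, inv_one', mul_one]
  calc pochPos N * (pochPos N)⁻¹ = _ := mul_inv_one (cc_pochPos N)

lemma qb_pascal (a b : ℕ) :
    qb (a+b+2) (a+1) = qb (a+b+1) (a+1) + XX ^ (b+1) * qb (a+b+1) a := by
  have h1 : a+b+2 - (a+1) = b+1 := by omega
  have h2 : a+b+1 - (a+1) = b := by omega
  have h3 : a+b+1 - a = b+1 := by omega
  have hu : pochPos (a+1) * pochPos (b+1) ≠ 0 :=
    mul_ne_zero (pochPos_ne _) (pochPos_ne _)
  apply mul_right_cancel₀ hu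
  rw [qb, qb, qb, h1, h2, h3]
  have c1 := inv_mul_one (cc_pochPos (a+1))
  have c2 := inv_mul_one (cc_pochPos (b+1))
  have cb : (pochPos b)⁻¹ * pochPos (b+1) = 1 - XX ^ (b+1) := by
    rw [pochPos_succ, ← mul_assoc, inv_mul_one (cc_pochPos b), one_mul]
  have ca : (pochPos a)⁻¹ * pochPos (a+1) = 1 - XX ^ (a+1) := by
    rw [pochPos_succ, ← mul_assoc, inv_mul_one (cc_pochPos a), one_mul]
  have hx : XX ^ (b+1) * XX ^ (a+1) = XX ^ (a+b+2) := by
    rw [← pow_add]; congr 1; omega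
  have key : pochPos (a+b+2) = pochPos (a+b+1) * (1 - XX ^ (b+1)) +
      XX ^ (b+1) * (pochPos (a+b+1) * (1 - XX ^ (a+1))) := by
    rw [show a+b+2 = (a+b+1)+1 from rfl, pochPos_succ, show (a+b+1)+1 = a+b+2 from rfl, ← hx]
    ring
  have t1 : (pochPos (a+b+1) * (pochPos (a+1))⁻¹ * (pochPos b)⁻¹) *
      (pochPos (a+1) * pochPos (b+1)) = pochPos (a+b+1) * (1 - XX ^ (b+1)) := by
    calc _ = pochPos (a+b+1) * ((pochPos (a+1))⁻¹ * pochPos (a+1)) *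
        ((pochPos b)⁻¹ * pochPos (b+1)) := by ring
    _ = _ := by rw [c1, cb]; ring
  have t2 : (pochPos (a+b+1) * (pochPos a)⁻¹ * (pochPos (b+1))⁻¹) *
      (pochPos (a+1) * pochPos (b+1)) = pochPos (a+b+1) * (1 - XX ^ (a+1)) := by
    calc _ = pochPos (a+b+1) * ((pochPos a)⁻¹ * pochPos (a+1)) *
        ((pochPos (b+1))⁻¹ * pochPos (b+1)) := by ring
    _ = _ := by rw [c2, ca]; ring
  calc pochPos (a+b+2) * (pochPos (a+1))⁻¹ * (pochPos (b+1))⁻¹ *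
        (pochPos (a+1) * pochPos (b+1))
      = pochPos (a+b+2) * ((pochPos (a+1))⁻¹ * pochPos (a+1)) *
        ((pochPos (b+1))⁻¹ * pochPos (b+1)) := by ring
    _ = pochPos (a+b+2) := by rw [c1, c2]; ring
    _ = pochPos (a+b+1) * (1 - XX ^ (b+1)) +
        XX ^ (b+1) * (pochPos (a+b+1) * (1 - XX ^ (a+1))) := key
    _ = (pochPos (a+b+1) * (pochPos (a+1))⁻¹ * (pochPos b)⁻¹) *
          (pochPos (a+1) * pochPos (b+1)) +
        XX ^ (b+1) * ((pochPos (a+b+1) * (pochPos a)⁻¹ * (pochPos (b+1))⁻¹) *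
          (pochPos (a+1) * pochPos (b+1))) := by rw [t1, t2]
    _ = (pochPos (a+b+1) * (pochPos (a+1))⁻¹ * (pochPos b)⁻¹ +
        XX ^ (b+1) * (pochPos (a+b+1) * (pochPos a)⁻¹ * (pochPos (b+1))⁻¹)) *
          (pochPos (a+1) * pochPos (b+1)) := by ring

/-- the q-binomial theorem for (−q;q)_N -/
lemma pochBinom : ∀ N, pochNeg N = ∑ j ∈ range (N+1), XX ^ (T j) * qb N j := by
  intro N
  induction N with
  | zero => simp [pochNeg_zero, T_zero, qb_zero]
  | succ N ih =>
      have pas : ∀ j ∈ range N, XX ^ (T (j+1)) * qb (N+1) (j+1)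
          = XX ^ (T (j+1)) * qb N (j+1) + XX ^ (N+1) * (XX ^ (T j) * qb N j) := by
        intro j hj
        have hj' : j < N := by simpa using hj
        have hp := qb_pascal j (N-1-j)
        rw [show j+(N-1-j)+2 = N+1 by omega, show j+(N-1-j)+1 = N by omega,
          show N-1-j+1 = N-j by omega] at hp
        rw [hp]
        have he : T (j+1) + (N-j) = (N+1) + T j := by
          have := T_succ j
          omega
        calc XX ^ (T (j+1)) * (qb N (j+1) + XX ^ (N-j) * qb N j)
            = XX ^ (T (j+1)) * qb N (j+1) + XX ^ (T (j+1) + (N-j)) * qb N j := by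
              rw [pow_add]; ring
          _ = _ := by rw [he, pow_add]; ring
      set S := ∑ j ∈ range (N+1), XX ^ (T j) * qb N j with hSdef
      set SB := ∑ j ∈ range N, XX ^ (T (j+1)) * qb N (j+1) with hSBdef
      set SC := ∑ j ∈ range N, XX ^ (T j) * qb N j with hSCdef
      have hS1 : S = SB + 1 := by
        rw [hSdef, Finset.sum_range_succ' _ N, qb_zero, T_zero, pow_zero, mul_one]
      have hS2 : S = SC + XX ^ (T N) := by
        rw [hSdef, Finset.sum_range_succ _ N, qb_self, mul_one]
      have hT : ∑ j ∈ range (N+2), XX ^ (T j) * qb (N+1) j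
          = SB + (∑ j ∈ range N, XX ^ (N+1) * (XX ^ (T j) * qb N j)) + 1 + XX ^ (T (N+1)) := by
        rw [Finset.sum_range_succ _ (N+1), Finset.sum_range_succ' _ N,
          Finset.sum_congr rfl pas, Finset.sum_add_distrib, qb_zero, qb_self,
          T_zero, pow_zero]
        ring
      have hX : (∑ j ∈ range N, XX ^ (N+1) * (XX ^ (T j) * qb N j)) = XX ^ (N+1) * SC :=
        (Finset.mul_sum _ _ _).symm
      rw [pochNeg_succ, ih, hT, hX]
      have : S * (1 + XX ^ (N+1)) = S + XX ^ (N+1) * S := by ring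
      rw [this]
      nth_rewrite 1 [hS1]
      rw [hS2, T_succ N, pow_add]
      ring



noncomputable def uu (j m : ℕ) : PowerSeries ℚ :=
  XX ^ ((j*j+j) + (T m + m*j)) * ((pochPos j)⁻¹ * (pochPos m)⁻¹)

lemma exp_eq (j m : ℕ) : T (j+m) + T j = (j*j+j) + (T m + m*j) := by
  have h1 := T_add j m
  have h2 := two_T j
  have h3 : j*m = m*j := Nat.mul_comm j m
  omega

lemma coeff_uu_high {j m n : ℕ} (h : n < j + m) : cf n (uu j m) = 0 := by
  rw [uu]
  apply coeff_X_pow_mul_low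
  have h1 := T_ge m
  have h2 : 0 ≤ j*j := Nat.zero_le _
  omega

lemma tStar_eq (N : ℕ) :
    (if N = 0 then 1 else
        (PowerSeries.X : PowerSeries ℚ) ^ (N * (N + 1) / 2) * pochNeg (N - 1) *
          (1 + (PowerSeries.X : PowerSeries ℚ) ^ N) * (pochPos N)⁻¹)
      = XX ^ (T N) * pochNeg N * (pochPos N)⁻¹ := by
  rcases N with _ | N
  · simp [T_zero, pochNeg_zero, pochPos_zero, inv_one']
  · rw [if_neg (Nat.succ_ne_zero N)]
    have h1 : N + 1 - 1 = N := rfl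
    rw [h1, pochNeg_succ]
    show XX ^ (T (N+1)) * pochNeg N * (1 + XX ^ (N+1)) * (pochPos (N+1))⁻¹ = _
    ring

lemma t'_expand (N : ℕ) :
    XX ^ (T N) * pochNeg N * (pochPos N)⁻¹ = ∑ j ∈ range (N+1), uu j (N-j) := by
  rw [pochBinom N, Finset.mul_sum, Finset.sum_mul]
  apply Finset.sum_congr rfl
  intro j hj
  have hj' : j ≤ N := by
    simp only [Finset.mem_range] at hj; omega
  have hm : j + (N - j) = N := by omega
  have he : T N + T j = (j*j+j) + (T (N-j) + (N-j)*j) := by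
    conv_lhs => rw [← hm]
    exact exp_eq j (N-j)
  calc XX ^ (T N) * (XX ^ (T j) * qb N j) * (pochPos N)⁻¹
      = XX ^ (T N) * XX ^ (T j) * ((pochPos j)⁻¹ * (pochPos (N-j))⁻¹) *
        (pochPos N * (pochPos N)⁻¹) := by rw [qb]; ring
    _ = XX ^ (T N + T j) * ((pochPos j)⁻¹ * (pochPos (N-j))⁻¹) := by
        rw [mul_inv_one (cc_pochPos N), pow_add]; ring
    _ = uu j (N-j) := by rw [he, uu]

lemma tri_sum {M : Type*} [AddCommMonoid M] (F : ℕ → ℕ → M) :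
    ∀ n, ∑ N ∈ range n, ∑ j ∈ range (N+1), F j (N - j)
      = ∑ j ∈ range n, ∑ m ∈ range (n - j), F j m := by
  intro n
  induction n with
  | zero => simp
  | succ n ih =>
      rw [Finset.sum_range_succ (fun N => ∑ j ∈ range (N+1), F j (N - j)) n, ih,
        Finset.sum_range_succ (fun j => ∑ m ∈ range (n+1-j), F j m) n]
      have h1 : ∀ j ∈ range n, ∑ m ∈ range (n+1-j), F j m
          = ∑ m ∈ range (n-j), F j m + F j (n-j) := by
        intro j hj
        simp only [Finset.mem_range] at hj
        rw [show n+1-j = (n-j)+1 by omega, Finset.sum_range_succ]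
      rw [Finset.sum_congr rfl h1, Finset.sum_add_distrib,
        Finset.sum_range_succ (fun j => F j (n - j)) n,
        show n+1-n = 1 by omega, Finset.sum_range_one, Nat.sub_self]
      abel

lemma pPos_one (m : ℕ) : pPos 1 m = pochPos m := by
  simp only [pPos, pochPos, one_mul]

lemma pNeg_one (j : ℕ) : pNeg 1 j = pochNeg j := by
  simp only [pNeg, pochNeg, one_mul]

lemma tE_one (j m : ℕ) : tE 1 j m = XX ^ (T m + m*j) * (pochPos m)⁻¹ := by
  simp only [tE, one_mul, pPos_one]

lemma sum_swap :
    seriesSum (fun N => ∑ j ∈ range (N+1), uu j (N-j))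
      = seriesSum (fun j => (XX ^ (j*j+j) * (pochPos j)⁻¹) * SE 1 j) := by
  ext n
  rw [coeff_seriesSum, coeff_seriesSum, map_sum, map_sum]
  calc ∑ N ∈ range (n+1), cf n (∑ j ∈ range (N+1), uu j (N-j))
      = ∑ N ∈ range (n+1), ∑ j ∈ range (N+1), cf n (uu j (N-j)) := by
        apply Finset.sum_congr rfl; intro N _; exact map_sum _ _ _
    _ = ∑ j ∈ range (n+1), ∑ m ∈ range (n+1-j), cf n (uu j m) :=
        tri_sum (fun j m => cf n (uu j m)) (n+1)
    _ = ∑ j ∈ range (n+1), ∑ m ∈ range (n+1), cf n (uu j m) := by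
        apply Finset.sum_congr rfl; intro j hj
        simp only [Finset.mem_range] at hj
        apply Finset.sum_subset (Finset.range_subset_range.2 (by omega))
        intro m _ hm
        simp only [Finset.mem_range] at hm
        exact coeff_uu_high (by omega)
    _ = ∑ j ∈ range (n+1), cf n ((XX ^ (j*j+j) * (pochPos j)⁻¹) * SE 1 j) := by
        apply Finset.sum_congr rfl
        intro j _
        rw [← map_sum]
        have l3 : ∑ m ∈ range (n+1), uu j m
            = (XX ^ (j*j+j) * (pochPos j)⁻¹) * (∑ m ∈ range (n+1), tE 1 j m) := by
          rw [Finset.mul_sum]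
          apply Finset.sum_congr rfl
          intro m _
          rw [uu, tE_one, pow_add]; ring
        rw [l3, ← coeff_mul_seriesSum (ord_tE 1 j le_rfl) (XX ^ (j*j+j) * (pochPos j)⁻¹) n]
        rfl

lemma pp2 (j : ℕ) : pochPos j * pochNeg j = pochPos2 j := by
  rw [pochPos, pochNeg, pochPos2, ← Finset.prod_mul_distrib]
  apply Finset.prod_congr rfl
  intro i _
  have hx : XX ^ (i+1) * XX ^ (i+1) = XX ^ (2*(i+1)) := by
    rw [← pow_add]; congr 1; ring
  calc (1 - XX ^ (i+1)) * (1 + XX ^ (i+1)) = 1 - XX ^ (i+1) * XX ^ (i+1) := by ring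
  _ = 1 - XX ^ (2*(i+1)) := by rw [hx]

lemma vv_eq (j : ℕ) : (XX ^ (j*j+j) * (pochPos j)⁻¹) * SE 1 j
    = seriesProd (fun i => 1 + XX ^ (1*(i+1))) * (XX ^ (j*j+j) * (pochPos2 j)⁻¹) := by
  rw [← euler 1 le_rfl, ← pNeg_SE 1 le_rfl j, pNeg_one]
  have hinv : (pochPos2 j)⁻¹ * pochNeg j = (pochPos j)⁻¹ := by
    rw [← pp2 j]
    exact inv_mul_peel (cc_pochPos j) (cc_pochNeg j)
  calc (XX ^ (j*j+j) * (pochPos j)⁻¹) * SE 1 j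
      = XX ^ (j*j+j) * ((pochPos2 j)⁻¹ * pochNeg j) * SE 1 j := by rw [hinv]
    _ = pochNeg j * SE 1 j * (XX ^ (j*j+j) * (pochPos2 j)⁻¹) := by ring

lemma seriesSum_mul_left (W : PowerSeries ℚ) {c : ℕ → PowerSeries ℚ} (h : Ord c) :
    seriesSum (fun j => W * c j) = W * seriesSum c := by
  ext n
  rw [coeff_seriesSum, coeff_mul_seriesSum h W n, Finset.mul_sum]

lemma ord_ww : Ord (fun j => XX ^ (j*j+j) * (pochPos2 j)⁻¹) := by
  intro j n h
  show cf n (XX ^ (j*j+j) * (pochPos2 j)⁻¹) = 0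
  apply coeff_X_pow_mul_low
  have h2 : 0 ≤ j*j := Nat.zero_le _
  omega

lemma ww_eq (j : ℕ) : XX ^ (j*j+j) * (pochPos2 j)⁻¹ = tE 2 0 j := by
  rw [tE]
  have h : 2*(T j + j*0) = j*j+j := by
    have := two_T j
    simp only [Nat.mul_zero, Nat.add_zero]
    omega
  rw [h]
  rfl

lemma main_lhs :
    seriesSum (fun N => XX ^ (T N) * pochNeg N * (pochPos N)⁻¹)
      = seriesProd (fun i => 1 + XX ^ (i+1)) * seriesProd (fun i => 1 + XX ^ (2*(i+1))) := by
  calc seriesSum (fun N => XX ^ (T N) * pochNeg N * (pochPos N)⁻¹)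
      = seriesSum (fun N => ∑ j ∈ range (N+1), uu j (N-j)) :=
        congrArg seriesSum (funext t'_expand)
    _ = seriesSum (fun j => (XX ^ (j*j+j) * (pochPos j)⁻¹) * SE 1 j) := sum_swap
    _ = seriesSum (fun j => seriesProd (fun i => 1 + XX ^ (1*(i+1))) *
          (XX ^ (j*j+j) * (pochPos2 j)⁻¹)) := congrArg seriesSum (funext vv_eq)
    _ = seriesProd (fun i => 1 + XX ^ (1*(i+1))) *
          seriesSum (fun j => XX ^ (j*j+j) * (pochPos2 j)⁻¹) :=
        seriesSum_mul_left _ ord_ww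
    _ = seriesProd (fun i => 1 + XX ^ (1*(i+1))) * SE 2 0 := by
        rw [show (fun j => XX ^ (j*j+j) * (pochPos2 j)⁻¹) = (fun j => tE 2 0 j) from
          funext ww_eq]
        rfl
    _ = seriesProd (fun i => 1 + XX ^ (1*(i+1))) * seriesProd (fun i => 1 + XX ^ (2*(i+1))) := by
        rw [euler 2 (by omega)]
    _ = seriesProd (fun i => 1 + XX ^ (i+1)) * seriesProd (fun i => 1 + XX ^ (2*(i+1))) := by
        rw [show (fun i => (1 : PowerSeries ℚ) + XX ^ (1*(i+1))) = (fun i => 1 + XX ^ (i+1))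
          from funext (fun i => by rw [one_mul])]

end CSS

/-- The case k = 2, a = 1 of the Chen–Sang–Shi identity (1.1):
∑_{N₁≥0} q^{N₁(N₁+1)/2} (−q)_{N₁−1} (1+q^{N₁}) / (q)_{N₁}
  = (−q)_∞ (q, q³, q⁴; q⁴)_∞ / (q)_∞,
where the N₁ = 0 term of the sum is 1. -/
theorem chen_sang_shi_k2_a1 :
    seriesSum (fun N => if N = 0 then 1 else
        (PowerSeries.X : PowerSeries ℚ) ^ (N * (N + 1) / 2) * pochNeg (N - 1) *
          (1 + (PowerSeries.X : PowerSeries ℚ) ^ N) * (pochPos N)⁻¹) =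
      seriesProd (fun i => 1 + (PowerSeries.X : PowerSeries ℚ) ^ (i + 1)) *
        seriesProd (fun i => 1 - (PowerSeries.X : PowerSeries ℚ) ^ (4 * i + 1)) *
        seriesProd (fun i => 1 - (PowerSeries.X : PowerSeries ℚ) ^ (4 * i + 3)) *
        seriesProd (fun i => 1 - (PowerSeries.X : PowerSeries ℚ) ^ (4 * i + 4)) *
        (seriesProd (fun i => 1 - (PowerSeries.X : PowerSeries ℚ) ^ (i + 1)))⁻¹ := by
  rw [CSS.RHS_eq]
  rw [show (fun N => if N = 0 then 1 else
        (PowerSeries.X : PowerSeries ℚ) ^ (N * (N + 1) / 2) * pochNeg (N - 1) *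
          (1 + (PowerSeries.X : PowerSeries ℚ) ^ N) * (pochPos N)⁻¹)
      = (fun N => (PowerSeries.X : PowerSeries ℚ) ^ (CSS.T N) * pochNeg N * (pochPos N)⁻¹)
    from funext CSS.tStar_eq]
  exact CSS.main_lhs
end

section
/- For k = 2, a = 1, the identity ∑_{N₁ ≥ 0} q^{N₁(N₁+1)/2} (−q;q)_{N₁−1} (1 + q^{N₁}) / (q²;q²)_{N₁} = (−q;q)_∞ (q, q², q³; q³)_∞ / (q;q)_∞ holds as formal power series, where the N₁ = 0 term is 1. -/
open PowerSeries

/-! ### Auxiliary lemmas -/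

private lemma cc_one_sub (k : ℕ) :
    constantCoeff (1 - (X : PowerSeries ℚ) ^ (k + 1)) = 1 := by
  simp

private lemma cc_one_add (k : ℕ) :
    constantCoeff (1 + (X : PowerSeries ℚ) ^ (k + 1)) = 1 := by
  simp

private lemma cc_pochPos (N : ℕ) : constantCoeff (pochPos N) = 1 := by
  rw [pochPos, map_prod]
  simp

private lemma cc_pochPos2 (N : ℕ) : constantCoeff (pochPos2 N) = 1 := by
  rw [pochPos2, map_prod]
  simp

private lemma cc_pochNeg (N : ℕ) : constantCoeff (pochNeg N) = 1 := by
  rw [pochNeg, map_prod]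
  simp

private lemma dvd_sub_mul {k : ℕ} {a a' b b' : PowerSeries ℚ}
    (ha : (X : PowerSeries ℚ)^k ∣ a - a') (hb : (X : PowerSeries ℚ)^k ∣ b - b') :
    (X : PowerSeries ℚ)^k ∣ a * b - a' * b' := by
  have h : a * b - a' * b' = (a - a') * b + a' * (b - b') := by ring
  rw [h]
  exact dvd_add (ha.mul_right _) (hb.mul_left _)

private lemma Xdvd_prod_sub_one {k : ℕ} {s : Finset ℕ} {f : ℕ → PowerSeries ℚ}
    (h : ∀ i ∈ s, (X : PowerSeries ℚ)^k ∣ f i - 1) :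
    (X : PowerSeries ℚ)^k ∣ (∏ i ∈ s, f i) - 1 := by
  classical
  induction s using Finset.induction_on with
  | empty => simp
  | insert a s ha ih =>
    rw [Finset.prod_insert ha]
    have h1 := h a (Finset.mem_insert_self a s)
    have h2 := ih fun i hi => h i (Finset.mem_insert_of_mem hi)
    have he : f a * ∏ i ∈ s, f i - 1
        = (f a - 1) * (∏ i ∈ s, f i) + ((∏ i ∈ s, f i) - 1) := by ring
    rw [he]
    exact dvd_add (h1.mul_right _) h2

private lemma coeff_eq_of_dvd {n : ℕ} {a b : PowerSeries ℚ}
    (h : (X : PowerSeries ℚ)^(n+1) ∣ a - b) : coeff n a = coeff n b := by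
  have h2 := (PowerSeries.X_pow_dvd_iff.mp h) n (Nat.lt_succ_self n)
  rw [map_sub] at h2
  linarith

private lemma seriesProd_dvd (f : ℕ → PowerSeries ℚ)
    (hf : ∀ i, (X : PowerSeries ℚ)^(i+1) ∣ f i - 1) (n : ℕ) :
    (X : PowerSeries ℚ)^(n+1) ∣ seriesProd f - ∏ i ∈ Finset.range (n+1), f i := by
  rw [PowerSeries.X_pow_dvd_iff]
  intro m hm
  rw [map_sub, sub_eq_zero]
  have h1 : coeff m (seriesProd f) = coeff m (∏ i ∈ Finset.range (m+1), f i) := by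
    simp [seriesProd, coeff_mk]
  rw [h1]
  obtain ⟨k, hk⟩ := Nat.exists_eq_add_of_le (Nat.succ_le_of_lt hm)
  symm
  apply coeff_eq_of_dvd
  rw [hk, Finset.prod_range_add]
  have htail : (X : PowerSeries ℚ)^(m+1) ∣ (∏ i ∈ Finset.range k, f (m + 1 + i)) - 1 := by
    apply Xdvd_prod_sub_one
    intro i _
    exact dvd_trans (pow_dvd_pow _ (by omega)) (hf (m + 1 + i))
  have he : (∏ i ∈ Finset.range (m+1), f i) * ∏ i ∈ Finset.range k, f (m + 1 + i)
      - ∏ i ∈ Finset.range (m+1), f i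
      = (∏ i ∈ Finset.range (m+1), f i) * ((∏ i ∈ Finset.range k, f (m + 1 + i)) - 1) := by
    ring
  rw [he]
  exact htail.mul_left _

private lemma seriesSum_dvd (c : ℕ → PowerSeries ℚ)
    (hc : ∀ i, (X : PowerSeries ℚ)^i ∣ c i) (n : ℕ) :
    (X : PowerSeries ℚ)^(n+1) ∣ seriesSum c - ∑ i ∈ Finset.range (n+1), c i := by
  rw [PowerSeries.X_pow_dvd_iff]
  intro m hm
  rw [map_sub, sub_eq_zero]
  have h1 : coeff m (seriesSum c) = coeff m (∑ i ∈ Finset.range (m+1), c i) := by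
    simp [seriesSum, coeff_mk]
  rw [h1]
  obtain ⟨k, hk⟩ := Nat.exists_eq_add_of_le (Nat.succ_le_of_lt hm)
  have h2 : ∑ i ∈ Finset.range (n+1), c i
      = ∑ i ∈ Finset.range (m+1), c i + ∑ i ∈ Finset.range k, c (m+1+i) := by
    rw [hk]; exact Finset.sum_range_add _ _ _
  rw [h2, map_add, left_eq_add, map_sum]
  apply Finset.sum_eq_zero
  intro i _
  have hd : (X : PowerSeries ℚ)^(m+1) ∣ c (m + 1 + i) :=
    dvd_trans (pow_dvd_pow _ (by omega)) (hc (m + 1 + i))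
  exact (PowerSeries.X_pow_dvd_iff.mp hd) m (Nat.lt_succ_self m)

private lemma pochPos_succ (N : ℕ) :
    pochPos (N+1) = pochPos N * (1 - (X : PowerSeries ℚ)^(N+1)) :=
  Finset.prod_range_succ _ _

private lemma pochNeg_succ (N : ℕ) :
    pochNeg (N+1) = pochNeg N * (1 + (X : PowerSeries ℚ)^(N+1)) :=
  Finset.prod_range_succ _ _

private lemma pochPos2_eq (N : ℕ) : pochPos2 N = pochPos N * pochNeg N := by
  induction N with
  | zero => simp [pochPos2, pochPos, pochNeg]
  | succ n ih =>
    have h1 : pochPos2 (n+1) = pochPos2 n * (1 - (X : PowerSeries ℚ)^(2*(n+1))) :=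
      Finset.prod_range_succ _ _
    have hX : (X : PowerSeries ℚ)^(2*(n+1)) = X^(n+1) * X^(n+1) := by
      rw [two_mul, pow_add]
    rw [h1, ih, pochPos_succ, pochNeg_succ, hX]
    ring

private lemma inv_pochPos_succ (N : ℕ) :
    (1 - (X : PowerSeries ℚ)^(N+1)) * (pochPos (N+1))⁻¹ = (pochPos N)⁻¹ := by
  rw [PowerSeries.eq_inv_iff_mul_eq_one (by rw [cc_pochPos]; norm_num)]
  have h : (1 - (X : PowerSeries ℚ)^(N+1)) * (pochPos (N+1))⁻¹ * pochPos N
      = pochPos (N+1) * (pochPos (N+1))⁻¹ := by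
    rw [pochPos_succ]; ring
  rw [h, PowerSeries.mul_inv_cancel _ (by rw [cc_pochPos]; norm_num)]

private lemma pochNeg_mul_inv2 (N : ℕ) :
    pochNeg N * (pochPos2 N)⁻¹ = (pochPos N)⁻¹ := by
  rw [PowerSeries.eq_inv_iff_mul_eq_one (by rw [cc_pochPos]; norm_num)]
  have h : pochNeg N * (pochPos2 N)⁻¹ * pochPos N = pochPos2 N * (pochPos2 N)⁻¹ := by
    rw [pochPos2_eq]; ring
  rw [h, PowerSeries.mul_inv_cancel _ (by rw [cc_pochPos2]; norm_num)]

/-- `hProd M N = ∏_{j=0}^{N-1} (1 - X^(M-j))`. -/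
private noncomputable def hProd (M N : ℕ) : PowerSeries ℚ :=
  ∏ j ∈ Finset.range N, (1 - (X : PowerSeries ℚ) ^ (M - j))

private lemma hProd_zero (M : ℕ) : hProd M 0 = 1 := by simp [hProd]

private lemma hProd_succ (M N : ℕ) :
    hProd M (N+1) = hProd M N * (1 - (X : PowerSeries ℚ)^(M - N)) :=
  Finset.prod_range_succ _ _

private lemma hProd_succ_top (M N : ℕ) :
    hProd (M+1) (N+1) = hProd M N * (1 - (X : PowerSeries ℚ)^(M+1)) := by
  rw [hProd, Finset.prod_range_succ']
  simp only [Nat.succ_sub_succ_eq_sub, Nat.sub_zero]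
  rfl

private lemma hProd_top_zero (M : ℕ) : hProd M (M+1) = 0 := by
  rw [hProd_succ, Nat.sub_self]
  simp

private lemma hProd_pascal {M N : ℕ} (h : N ≤ M) :
    hProd (M+1) (N+1)
      = hProd M (N+1) + (X : PowerSeries ℚ)^(M - N) * (1 - X^(N+1)) * hProd M N := by
  rw [hProd_succ_top, hProd_succ]
  have key : (X : PowerSeries ℚ)^(M-N) * X^(N+1) = X^(M+1) := by
    rw [← pow_add]
    congr 1
    omega
  linear_combination (hProd M N) * key

private lemma tri_succ (N : ℕ) : (N+1)*((N+1)+1)/2 = N*(N+1)/2 + (N+1) := by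
  have h : (N+1)*((N+1)+1) = N*(N+1) + (N+1)*2 := by ring
  rw [h, Nat.add_mul_div_right _ _ two_pos]

private lemma tri_ge (N : ℕ) : N ≤ N*(N+1)/2 := by
  induction N with
  | zero => simp
  | succ n ih =>
    rw [tri_succ]
    omega

private lemma gaussH (M : ℕ) :
    ∑ N ∈ Finset.range (M+1),
        (X : PowerSeries ℚ)^(N*(N+1)/2) * hProd M N * (pochPos N)⁻¹ = pochNeg M := by
  induction M with
  | zero => simp [hProd, pochNeg, pochPos]
  | succ M ih =>
    rw [Finset.sum_range_succ']
    have hterm : ∀ N ∈ Finset.range (M+1),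
        (X : PowerSeries ℚ)^((N+1)*((N+1)+1)/2) * hProd (M+1) (N+1) * (pochPos (N+1))⁻¹
        = (X : PowerSeries ℚ)^((N+1)*((N+1)+1)/2) * hProd M (N+1) * (pochPos (N+1))⁻¹
          + (X : PowerSeries ℚ)^(M+1) *
            ((X : PowerSeries ℚ)^(N*(N+1)/2) * hProd M N * (pochPos N)⁻¹) := by
      intro N hN
      have hNM : N ≤ M := by
        have := Finset.mem_range.mp hN; omega
      rw [hProd_pascal hNM]
      have hx : (X : PowerSeries ℚ)^((N+1)*((N+1)+1)/2) * ((X : PowerSeries ℚ)^(M - N) *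
          (1 - X^(N+1)) * hProd M N) * (pochPos (N+1))⁻¹
          = ((X : PowerSeries ℚ)^((N+1)*((N+1)+1)/2) * (X : PowerSeries ℚ)^(M - N)) *
            hProd M N * ((1 - X^(N+1)) * (pochPos (N+1))⁻¹) := by ring
      rw [mul_add, add_mul, hx, inv_pochPos_succ, ← pow_add]
      have he : (N+1)*((N+1)+1)/2 + (M - N) = (M+1) + N*(N+1)/2 := by
        rw [tri_succ]
        omega
      rw [he, pow_add]
      ring
    rw [Finset.sum_congr rfl hterm, Finset.sum_add_distrib, ← Finset.mul_sum, ih]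
    have hfirst : (∑ N ∈ Finset.range (M+1),
        (X : PowerSeries ℚ)^((N+1)*((N+1)+1)/2) * hProd M (N+1) * (pochPos (N+1))⁻¹)
        + (X : PowerSeries ℚ)^(0*(0+1)/2) * hProd (M+1) 0 * (pochPos 0)⁻¹
        = ∑ N ∈ Finset.range (M+1+1),
            (X : PowerSeries ℚ)^(N*(N+1)/2) * hProd M N * (pochPos N)⁻¹ := by
      rw [Finset.sum_range_succ'
        (fun N => (X : PowerSeries ℚ)^(N*(N+1)/2) * hProd M N * (pochPos N)⁻¹) (M+1)]
      congr 1
    have hsplit : ∑ N ∈ Finset.range (M+1+1),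
        (X : PowerSeries ℚ)^(N*(N+1)/2) * hProd M N * (pochPos N)⁻¹
        = pochNeg M := by
      rw [Finset.sum_range_succ, ih, hProd_top_zero]
      simp
    calc (∑ N ∈ Finset.range (M+1),
            (X : PowerSeries ℚ)^((N+1)*((N+1)+1)/2) * hProd M (N+1) * (pochPos (N+1))⁻¹)
          + (X : PowerSeries ℚ)^(M+1) * pochNeg M
          + (X : PowerSeries ℚ)^(0*(0+1)/2) * hProd (M+1) 0 * (pochPos 0)⁻¹
        = ((∑ N ∈ Finset.range (M+1),
            (X : PowerSeries ℚ)^((N+1)*((N+1)+1)/2) * hProd M (N+1) * (pochPos (N+1))⁻¹)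
          + (X : PowerSeries ℚ)^(0*(0+1)/2) * hProd (M+1) 0 * (pochPos 0)⁻¹)
          + (X : PowerSeries ℚ)^(M+1) * pochNeg M := by ring
      _ = pochNeg M + (X : PowerSeries ℚ)^(M+1) * pochNeg M := by rw [hfirst, hsplit]
      _ = pochNeg (M+1) := by rw [pochNeg_succ]; ring

private lemma tripleProd (m : ℕ) :
    (∏ i ∈ Finset.range m, (1 - (X : PowerSeries ℚ)^(3*i+1))) *
    (∏ i ∈ Finset.range m, (1 - (X : PowerSeries ℚ)^(3*i+2))) *
    (∏ i ∈ Finset.range m, (1 - (X : PowerSeries ℚ)^(3*i+3))) = pochPos (3*m) := by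
  induction m with
  | zero => simp [pochPos]
  | succ n ih =>
    rw [Finset.prod_range_succ, Finset.prod_range_succ, Finset.prod_range_succ]
    have h3 : 3*(n+1) = (3*n+2)+1 := by omega
    rw [h3, pochPos_succ]
    have h2 : 3*n+2 = (3*n+1)+1 := by omega
    rw [h2, pochPos_succ]
    have h1 : 3*n+1 = (3*n)+1 := by omega
    rw [h1, pochPos_succ, ← ih]
    have e1 : (3*n)+1+1 = 3*n+2 := by omega
    have e2 : (3*n+1)+1+1 = 3*n+3 := by omega
    rw [e1, e2]
    ring

private lemma c_simp (m : ℕ) :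
    (X : PowerSeries ℚ)^((m+1)*((m+1)+1)/2) * pochNeg ((m+1)-1) * (1 + X^(m+1)) *
      (pochPos2 (m+1))⁻¹
    = (X : PowerSeries ℚ)^((m+1)*((m+1)+1)/2) * (pochPos (m+1))⁻¹ := by
  have h1 : ((m+1)-1) = m := rfl
  rw [h1]
  have h2 : (X : PowerSeries ℚ)^((m+1)*((m+1)+1)/2) * pochNeg m * (1 + X^(m+1)) *
      (pochPos2 (m+1))⁻¹
      = (X : PowerSeries ℚ)^((m+1)*((m+1)+1)/2) *
        ((pochNeg m * (1 + X^(m+1))) * (pochPos2 (m+1))⁻¹) := by ring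
  rw [h2, ← pochNeg_succ, pochNeg_mul_inv2]

private lemma lhs_coeff (n : ℕ) :
    coeff n (seriesSum (fun N => if N = 0 then 1 else
        (X : PowerSeries ℚ) ^ (N * (N + 1) / 2) * pochNeg (N - 1) *
          (1 + (X : PowerSeries ℚ) ^ N) * (pochPos2 N)⁻¹))
      = coeff n (pochNeg (n+1)) := by
  set c : ℕ → PowerSeries ℚ := fun N => if N = 0 then 1 else
      (X : PowerSeries ℚ) ^ (N * (N + 1) / 2) * pochNeg (N - 1) *
        (1 + (X : PowerSeries ℚ) ^ N) * (pochPos2 N)⁻¹ with hcdef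
  have hc : ∀ i, (X : PowerSeries ℚ)^i ∣ c i := by
    intro i
    cases i with
    | zero => simp [hcdef]
    | succ m =>
      have : c (m+1) = (X : PowerSeries ℚ)^((m+1)*((m+1)+1)/2) * (pochPos (m+1))⁻¹ := by
        rw [hcdef]
        simp only [Nat.succ_ne_zero, if_false]
        exact c_simp m
      rw [this]
      exact Dvd.dvd.mul_right (pow_dvd_pow _ (tri_ge (m+1))) _
  apply coeff_eq_of_dvd
  have hg := gaussH (n+1)
  -- difference with partial sum
  have h1 := seriesSum_dvd c hc n
  -- partial sum vs Gauss sum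
  have h2 : (X : PowerSeries ℚ)^(n+1) ∣
      (∑ i ∈ Finset.range (n+1), c i) - pochNeg (n+1) := by
    rw [← hg, Finset.sum_range_succ
      (fun N => (X : PowerSeries ℚ)^(N*(N+1)/2) * hProd (n+1) N * (pochPos N)⁻¹) (n+1),
      ← sub_sub, ← Finset.sum_sub_distrib]
    apply dvd_sub
    · apply Finset.dvd_sum
      intro N hN
      have hNn : N ≤ n := by have := Finset.mem_range.mp hN; omega
      cases N with
      | zero =>
        have e : c 0 = (X : PowerSeries ℚ)^(0*(0+1)/2) * hProd (n+1) 0 * (pochPos 0)⁻¹ := by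
          rw [hcdef, hProd_zero]
          simp [pochPos]
        rw [e, sub_self]
        exact dvd_zero _
      | succ m =>
        have e : c (m+1) = (X : PowerSeries ℚ)^((m+1)*((m+1)+1)/2) * (pochPos (m+1))⁻¹ := by
          rw [hcdef]
          simp only [Nat.succ_ne_zero, if_false]
          exact c_simp m
        rw [e]
        have e2 : (X : PowerSeries ℚ)^((m+1)*((m+1)+1)/2) * (pochPos (m+1))⁻¹
            - (X : PowerSeries ℚ)^((m+1)*((m+1)+1)/2) * hProd (n+1) (m+1) * (pochPos (m+1))⁻¹
            = (X : PowerSeries ℚ)^((m+1)*((m+1)+1)/2) * (1 - hProd (n+1) (m+1)) *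
              (pochPos (m+1))⁻¹ := by ring
        rw [e2]
        have hh : (X : PowerSeries ℚ)^(n+1-m) ∣ (1 - hProd (n+1) (m+1)) := by
          rw [← dvd_neg, neg_sub]
          apply Xdvd_prod_sub_one
          intro j hj
          have hjm : j < m+1 := Finset.mem_range.mp hj
          have e3 : (1 : PowerSeries ℚ) - X ^ ((n+1) - j) - 1 = -(X^((n+1) - j)) := by ring
          rw [e3, dvd_neg]
          exact pow_dvd_pow _ (by omega)
        obtain ⟨w, hw⟩ := hh
        rw [hw]
        have e4 : (X : PowerSeries ℚ)^((m+1)*((m+1)+1)/2) * (X^(n+1-m) * w) *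
            (pochPos (m+1))⁻¹
            = (X : PowerSeries ℚ)^((m+1)*((m+1)+1)/2 + (n+1-m)) * (w * (pochPos (m+1))⁻¹) := by
          rw [pow_add]; ring
        rw [e4]
        have := tri_ge (m+1)
        exact Dvd.dvd.mul_right (pow_dvd_pow _ (by omega)) _
    · have := tri_ge (n+1)
      exact Dvd.dvd.mul_right (Dvd.dvd.mul_right (pow_dvd_pow _ (by omega)) _) _
  have := dvd_add h1 h2
  rwa [sub_add_sub_cancel] at this

private lemma cc_seriesProd_sub (g : ℕ → ℕ) :
    constantCoeff (seriesProd (fun i => 1 - (X : PowerSeries ℚ)^(g i + 1))) = 1 := by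
  rw [← coeff_zero_eq_constantCoeff_apply]
  simp [seriesProd, coeff_mk, Finset.prod_range_one]

private lemma rhs_coeff (n : ℕ) :
    coeff n (
      seriesProd (fun i => 1 + (X : PowerSeries ℚ) ^ (i + 1)) *
        seriesProd (fun i => 1 - (X : PowerSeries ℚ) ^ (3 * i + 1)) *
        seriesProd (fun i => 1 - (X : PowerSeries ℚ) ^ (3 * i + 2)) *
        seriesProd (fun i => 1 - (X : PowerSeries ℚ) ^ (3 * i + 3)) *
        (seriesProd (fun i => 1 - (X : PowerSeries ℚ) ^ (i + 1)))⁻¹)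
      = coeff n (pochNeg (n+1)) := by
  apply coeff_eq_of_dvd
  set B : PowerSeries ℚ := seriesProd (fun i => 1 - (X : PowerSeries ℚ)^(i + 1)) with hBdef
  set P : PowerSeries ℚ := pochPos (n+1) with hPdef
  have hA : (X : PowerSeries ℚ)^(n+1) ∣
      seriesProd (fun i => 1 + (X : PowerSeries ℚ)^(i+1)) - pochNeg (n+1) := by
    exact seriesProd_dvd _ (fun i => by simp) n
  have hQ1 : (X : PowerSeries ℚ)^(n+1) ∣
      seriesProd (fun i => 1 - (X : PowerSeries ℚ)^(3*i+1))
        - ∏ i ∈ Finset.range (n+1), (1 - (X : PowerSeries ℚ)^(3*i+1)) := by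
    apply seriesProd_dvd
    intro i
    have e : (1 : PowerSeries ℚ) - X^(3*i+1) - 1 = -(X^(3*i+1)) := by ring
    rw [e, dvd_neg]
    exact pow_dvd_pow _ (by omega)
  have hQ2 : (X : PowerSeries ℚ)^(n+1) ∣
      seriesProd (fun i => 1 - (X : PowerSeries ℚ)^(3*i+2))
        - ∏ i ∈ Finset.range (n+1), (1 - (X : PowerSeries ℚ)^(3*i+2)) := by
    apply seriesProd_dvd
    intro i
    have e : (1 : PowerSeries ℚ) - X^(3*i+2) - 1 = -(X^(3*i+2)) := by ring
    rw [e, dvd_neg]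
    exact pow_dvd_pow _ (by omega)
  have hQ3 : (X : PowerSeries ℚ)^(n+1) ∣
      seriesProd (fun i => 1 - (X : PowerSeries ℚ)^(3*i+3))
        - ∏ i ∈ Finset.range (n+1), (1 - (X : PowerSeries ℚ)^(3*i+3)) := by
    apply seriesProd_dvd
    intro i
    have e : (1 : PowerSeries ℚ) - X^(3*i+3) - 1 = -(X^(3*i+3)) := by ring
    rw [e, dvd_neg]
    exact pow_dvd_pow _ (by omega)
  have hB : (X : PowerSeries ℚ)^(n+1) ∣ B - P := by
    exact seriesProd_dvd _ (fun i => by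
      have e : (1 : PowerSeries ℚ) - X^(i+1) - 1 = -(X^(i+1)) := by ring
      rw [e, dvd_neg]) n
  have hccB : constantCoeff B ≠ 0 := by
    have : constantCoeff B = 1 := cc_seriesProd_sub id
    rw [this]; norm_num
  have hccP : constantCoeff P ≠ 0 := by rw [hPdef, cc_pochPos]; norm_num
  have hBinv : (X : PowerSeries ℚ)^(n+1) ∣ B⁻¹ - P⁻¹ := by
    have hPP : P * P⁻¹ = 1 := PowerSeries.mul_inv_cancel _ hccP
    have hBB : B⁻¹ * B = 1 := PowerSeries.inv_mul_cancel _ hccB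
    have e : B⁻¹ - P⁻¹ = B⁻¹ * P⁻¹ * (P - B) := by
      have e2 : B⁻¹ * P⁻¹ * (P - B) = B⁻¹ * (P * P⁻¹) - (B⁻¹ * B) * P⁻¹ := by ring
      rw [e2, hPP, hBB, mul_one, one_mul]
    rw [e]
    exact Dvd.dvd.mul_left (dvd_sub_comm.mp hB) _
  have hchain := dvd_sub_mul (dvd_sub_mul (dvd_sub_mul (dvd_sub_mul hA hQ1) hQ2) hQ3) hBinv
  -- now compare the finite middle expression with pochNeg (n+1)
  have hmid : (X : PowerSeries ℚ)^(n+1) ∣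
      pochNeg (n+1) *
        (∏ i ∈ Finset.range (n+1), (1 - (X : PowerSeries ℚ)^(3*i+1))) *
        (∏ i ∈ Finset.range (n+1), (1 - (X : PowerSeries ℚ)^(3*i+2))) *
        (∏ i ∈ Finset.range (n+1), (1 - (X : PowerSeries ℚ)^(3*i+3))) * P⁻¹
      - pochNeg (n+1) := by
    have htri := tripleProd (n+1)
    have hsplitP : pochPos (3*(n+1))
        = pochPos (n+1) * ∏ i ∈ Finset.range (2*n+2), (1 - (X : PowerSeries ℚ)^((n+1)+i+1)) := by
      rw [pochPos]
      have e : 3*(n+1) = (n+1)+(2*n+2) := by omega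
      rw [e, Finset.prod_range_add]
      rfl
    have e1 : pochNeg (n+1) *
        (∏ i ∈ Finset.range (n+1), (1 - (X : PowerSeries ℚ)^(3*i+1))) *
        (∏ i ∈ Finset.range (n+1), (1 - (X : PowerSeries ℚ)^(3*i+2))) *
        (∏ i ∈ Finset.range (n+1), (1 - (X : PowerSeries ℚ)^(3*i+3))) * P⁻¹
        = pochNeg (n+1) * pochPos (3*(n+1)) * P⁻¹ := by
      rw [← htri]; ring
    rw [e1, hsplitP]
    have hPPinv : P * P⁻¹ = 1 := PowerSeries.mul_inv_cancel _ hccP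
    have e2 : pochNeg (n+1) *
        (pochPos (n+1) * ∏ i ∈ Finset.range (2*n+2), (1 - (X : PowerSeries ℚ)^((n+1)+i+1))) * P⁻¹
        = pochNeg (n+1) * (∏ i ∈ Finset.range (2*n+2), (1 - (X : PowerSeries ℚ)^((n+1)+i+1)))
          * (P * P⁻¹) := by
      rw [hPdef]; ring
    rw [e2, hPPinv, mul_one]
    have e3 : pochNeg (n+1) * (∏ i ∈ Finset.range (2*n+2), (1 - (X : PowerSeries ℚ)^((n+1)+i+1)))
        - pochNeg (n+1)
        = pochNeg (n+1) *
          ((∏ i ∈ Finset.range (2*n+2), (1 - (X : PowerSeries ℚ)^((n+1)+i+1))) - 1) := by ring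
    rw [e3]
    apply Dvd.dvd.mul_left
    apply Xdvd_prod_sub_one
    intro i _
    have e4 : (1 : PowerSeries ℚ) - X^((n+1)+i+1) - 1 = -(X^((n+1)+i+1)) := by ring
    rw [e4, dvd_neg]
    exact pow_dvd_pow _ (by omega)
  have := dvd_add hchain hmid
  rwa [sub_add_sub_cancel] at this

/-- The case k = 2, a = 1 of the Sang–Shi identity (1.2):
∑_{N₁≥0} q^{N₁(N₁+1)/2} (−q)_{N₁−1} (1+q^{N₁}) / (q²;q²)_{N₁}
  = (−q)_∞ (q, q², q³; q³)_∞ / (q)_∞,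
where the N₁ = 0 term of the sum is 1. -/
theorem sang_shi_k2_a1 :
    seriesSum (fun N => if N = 0 then 1 else
        (PowerSeries.X : PowerSeries ℚ) ^ (N * (N + 1) / 2) * pochNeg (N - 1) *
          (1 + (PowerSeries.X : PowerSeries ℚ) ^ N) * (pochPos2 N)⁻¹) =
      seriesProd (fun i => 1 + (PowerSeries.X : PowerSeries ℚ) ^ (i + 1)) *
        seriesProd (fun i => 1 - (PowerSeries.X : PowerSeries ℚ) ^ (3 * i + 1)) *
        seriesProd (fun i => 1 - (PowerSeries.X : PowerSeries ℚ) ^ (3 * i + 2)) *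
        seriesProd (fun i => 1 - (PowerSeries.X : PowerSeries ℚ) ^ (3 * i + 3)) *
        (seriesProd (fun i => 1 - (PowerSeries.X : PowerSeries ℚ) ^ (i + 1)))⁻¹ := by
  apply PowerSeries.ext
  intro n
  rw [lhs_coeff n, rhs_coeff n]
end

section
/- In the Gordon marking of an overpartition, the Gordon marking assignment is unique, and every overlined part receives mark 1. -/
/-- An overpartition, modeled as a non-increasing list of pairs (part, overlined?),
with positive parts, where each part size is overlined at most once. -/
def IsOverpartition (l : List (ℕ × Bool)) : Prop :=
  l.Pairwise (fun p q => q.1 ≤ p.1) ∧ (∀ p ∈ l, 0 < p.1) ∧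
    ∀ m : ℕ, (l.filter (fun p => decide (p.1 = m) && p.2)).length ≤ 1

/-- The number partitioned by an overpartition. -/
def opSum (l : List (ℕ × Bool)) : ℕ := (l.map Prod.fst).sum

/-- The Rogers–Ramanujan–Gordon type condition counted by B̄_{k,a}(n):
1 occurs as a non-overlined part at most a−1 times, and
λ_j − λ_{j+k−1} ≥ 1 if λ_j is overlined, ≥ 2 otherwise. -/
def BarBCond (k a : ℕ) (l : List (ℕ × Bool)) : Prop :=
  IsOverpartition l ∧
  (l.filter (fun p => decide (p.1 = 1) && !p.2)).length ≤ a - 1 ∧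
  ∀ j, j + (k - 1) < l.length →
    ((l.getD j (0, false)).2 = true →
      (l.getD (j + (k - 1)) (0, false)).1 + 1 ≤ (l.getD j (0, false)).1) ∧
    ((l.getD j (0, false)).2 = false →
      (l.getD (j + (k - 1)) (0, false)).1 + 2 ≤ (l.getD j (0, false)).1)

/-- The number of overpartitions of n counted by B̄_{k,a}(n). -/
noncomputable def BarB (k a n : ℕ) : ℕ :=
  Nat.card {l : List (ℕ × Bool) // BarBCond k a l ∧ opSum l = n}


/-- Total order key on overpartition parts: 1̄ < 1 < 2̄ < 2 < ⋯. -/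
def ordKey (p : ℕ × Bool) : ℕ := 2 * p.1 + (if p.2 then 0 else 1)

/-- The parts of an overpartition arranged increasingly in the order 1̄ < 1 < 2̄ < 2 < ⋯. -/
def ascParts (l : List (ℕ × Bool)) : List (ℕ × Bool) :=
  l.mergeSort (fun p q => decide (ordKey p ≤ ordKey q))

/-- The minimum of a list of naturals (0 for the empty list). -/
def listMin : List ℕ → ℕ
  | [] => 0
  | h :: t => t.foldl min h

/-- The least positive integer not occurring in the list s. -/
def mex1 (s : List ℕ) : ℕ :=
  ((List.range (s.length + 2)).filter (fun m => decide (0 < m) && !(s.contains m))).headD 0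

/-- The marks blocked for the part at position i of the ascending list `asc`, given the
marks g j of the earlier parts: marks already used on parts of the same size, and marks
used on parts of size one less — except that if the size of the part occurs overlined
in the overpartition, the smallest mark used on parts of size one less is not blocked. -/
def blockedMarks (asc : List (ℕ × Bool)) (g : ℕ → ℕ) (i : ℕ) : List ℕ :=
  (((List.range i).filter
      (fun j => decide ((asc.getD j (0, false)).1 = (asc.getD i (0, false)).1))).map g) ++
  (let prev := ((List.range i).filter
      (fun j => decide ((asc.getD j (0, false)).1 + 1 = (asc.getD i (0, false)).1))).map g
   if asc.contains ((asc.getD i (0, false)).1, true) then prev.erase (listMin prev)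
   else prev)

/-- g is the Gordon marking of the overpartition with ascending part list `asc`:
processing the parts in the order 1̄ < 1 < 2̄ < 2 < ⋯, each part receives the smallest
positive mark not blocked by the rules of the Gordon marking. -/
def IsGordonMarkingOn (asc : List (ℕ × Bool)) (g : ℕ → ℕ) : Prop :=
  ∀ i < asc.length, g i = mex1 (blockedMarks asc g i)

lemma foldl_min_le (t : List ℕ) (a : ℕ) : t.foldl min a ≤ a := by
  induction t generalizing a with
  | nil => simp
  | cons h t ih => exact le_trans (ih _) (min_le_left _ _)

lemma foldl_min_le_mem {t : List ℕ} {x : ℕ} (hx : x ∈ t) (a : ℕ) : t.foldl min a ≤ x := by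
  induction t generalizing a with
  | nil => simp at hx
  | cons b t ih =>
    rcases List.mem_cons.mp hx with rfl | hx
    · exact le_trans (foldl_min_le t (min a x)) (min_le_right a x)
    · exact ih hx _

lemma listMin_le {s : List ℕ} {x : ℕ} (hx : x ∈ s) : listMin s ≤ x := by
  cases s with
  | nil => simp at hx
  | cons h t =>
    rcases List.mem_cons.mp hx with rfl | hx
    · exact foldl_min_le _ _
    · exact foldl_min_le_mem hx _

-- mex1 lemmas
lemma mex1_filter_ne (s : List ℕ) :
    ((List.range (s.length + 2)).filter (fun m => decide (0 < m) && !(s.contains m))) ≠ [] := by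
  intro h
  have hsub : Finset.Icc 1 (s.length + 1) ⊆ s.toFinset := by
    intro m hm
    simp only [Finset.mem_Icc] at hm
    by_contra hms
    have hmem : m ∈ List.range (s.length + 2) := List.mem_range.mpr (by omega)
    have : m ∈ ((List.range (s.length + 2)).filter
        (fun m => decide (0 < m) && !(s.contains m))) := by
      refine List.mem_filter.mpr ⟨hmem, ?_⟩
      simp only [Bool.and_eq_true, decide_eq_true_eq, Bool.not_eq_true']
      exact ⟨by omega, by simpa using fun h => hms (List.mem_toFinset.mpr h)⟩
    rw [h] at this; simp at this
  have h1 := Finset.card_le_card hsub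
  have h2 := List.toFinset_card_le s
  simp [Nat.card_Icc] at h1
  omega

lemma mex1_spec (s : List ℕ) : 0 < mex1 s ∧ mex1 s ∉ s := by
  have hne := mex1_filter_ne s
  have hmem : mex1 s ∈ ((List.range (s.length + 2)).filter
      (fun m => decide (0 < m) && !(s.contains m))) := by
    rw [mex1, List.headD_eq_head?, List.head?_eq_head hne]
    exact List.head_mem hne
  have := (List.mem_filter.mp hmem).2
  simp only [Bool.and_eq_true, decide_eq_true_eq, Bool.not_eq_true'] at this
  refine ⟨this.1, ?_⟩
  have := this.2
  simpa using this

lemma mex1_pos (s : List ℕ) : 0 < mex1 s := (mex1_spec s).1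
lemma mex1_not_mem (s : List ℕ) : mex1 s ∉ s := (mex1_spec s).2

lemma mex1_eq_one {s : List ℕ} (h : 1 ∉ s) : mex1 s = 1 := by
  rw [mex1]
  have : s.length + 2 = 2 + s.length := by omega
  rw [this, List.range_add]
  have h2 : List.range 2 = [0, 1] := rfl
  rw [h2]
  simp only [List.filter_append, List.filter_cons, List.filter_nil]
  have h0 : (decide (0 < 0) && !(s.contains 0)) = false := by simp
  have h1' : (decide (0 < 1) && !(s.contains 1)) = true := by
    simp [h]
  rw [h0, h1']
  simp

lemma blockedMarks_congr (asc : List (ℕ × Bool)) {f f' : ℕ → ℕ} (i : ℕ)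
    (h : ∀ j < i, f j = f' j) : blockedMarks asc f i = blockedMarks asc f' i := by
  have key : ∀ (p : ℕ → Bool), ((List.range i).filter p).map f = ((List.range i).filter p).map f' := by
    intro p
    refine List.map_congr_left (fun j hj => ?_)
    exact h j (List.mem_range.mp (List.mem_filter.mp hj).1)
  simp only [blockedMarks, key]

def gvec (asc : List (ℕ × Bool)) : ℕ → List ℕ
  | 0 => []
  | n + 1 => gvec asc n ++ [mex1 (blockedMarks asc (fun j => (gvec asc n).getD j 0) n)]

lemma gvec_length (asc : List (ℕ × Bool)) : ∀ n, (gvec asc n).length = n := by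
  intro n
  induction n with
  | zero => rfl
  | succ n ih => simp [gvec, ih]

def gfun (asc : List (ℕ × Bool)) (i : ℕ) : ℕ := (gvec asc (i + 1)).getD i 0

lemma gvec_getD (asc : List (ℕ × Bool)) : ∀ n j, j < n → (gvec asc n).getD j 0 = gfun asc j := by
  intro n
  induction n with
  | zero => intro j hj; omega
  | succ n ih =>
    intro j hj
    rcases Nat.lt_or_ge j n with h | h
    · rw [show gvec asc (n+1) = gvec asc n ++ [_] from rfl,
        List.getD_append _ _ _ _ (by rw [gvec_length]; exact h)]
      exact ih j h
    · have : j = n := by omega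
      subst this
      rfl

lemma gfun_eq (asc : List (ℕ × Bool)) (i : ℕ) :
    gfun asc i = mex1 (blockedMarks asc (gfun asc) i) := by
  have h1 : gfun asc i = mex1 (blockedMarks asc (fun j => (gvec asc i).getD j 0) i) := by
    rw [gfun, show gvec asc (i+1) = gvec asc i ++ [_] from rfl]
    rw [List.getD_eq_getElem _ _ (by simp [gvec_length])]
    rw [List.getElem_append_right (by rw [gvec_length])]
    simp [gvec_length]
  rw [h1, blockedMarks_congr asc i (fun j hj => gvec_getD asc i j hj)]

lemma gordon_exists (asc : List (ℕ × Bool)) : IsGordonMarkingOn asc (gfun asc) :=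
  fun i _ => gfun_eq asc i

lemma gordon_unique (asc : List (ℕ × Bool)) (g g' : ℕ → ℕ)
    (hg : IsGordonMarkingOn asc g) (hg' : IsGordonMarkingOn asc g') :
    ∀ i < asc.length, g i = g' i := by
  intro i
  induction i using Nat.strong_induction_on with
  | _ i ih =>
    intro hi
    rw [hg i hi, hg' i hi, blockedMarks_congr asc i (fun j hj => ih j hj (lt_trans hj hi))]

lemma foldl_min_mem (t : List ℕ) (a : ℕ) : t.foldl min a = a ∨ t.foldl min a ∈ t := by
  induction t generalizing a with
  | nil => left; rfl
  | cons b t ih =>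
    rcases ih (min a b) with h | h
    · rcases Nat.le_total a b with hab | hab
      · left; rw [List.foldl_cons, h, min_eq_left hab]
      · right; rw [List.foldl_cons, h, min_eq_right hab]; exact List.mem_cons_self
    · right; exact List.mem_cons_of_mem _ h

lemma listMin_mem {s : List ℕ} (h : s ≠ []) : listMin s ∈ s := by
  cases s with
  | nil => exact absurd rfl h
  | cons b t =>
    rcases foldl_min_mem t b with h' | h'
    · rw [listMin, h']; exact List.mem_cons_self
    · exact List.mem_cons_of_mem _ h'

lemma gordon_overlined (l : List (ℕ × Bool)) (hl : IsOverpartition l)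
    (g : ℕ → ℕ) (hg : IsGordonMarkingOn (ascParts l) g)
    (i : ℕ) (hi : i < (ascParts l).length)
    (hov : ((ascParts l).getD i (0, false)).2 = true) : g i = 1 := by
  set asc := ascParts l with hasc
  obtain ⟨m, hmov⟩ : ∃ m, asc.getD i (0, false) = (m, true) :=
    ⟨(asc.getD i (0, false)).1, Prod.ext rfl hov⟩
  have hperm : asc.Perm l := List.mergeSort_perm l _
  -- sortedness
  have hpair : List.Pairwise (fun a b => decide (ordKey a ≤ ordKey b) = true) asc := by
    rw [hasc, ascParts]
    exact List.pairwise_mergeSort (by intro a b c hab hbc; simp only [decide_eq_true_eq] at *; omega)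
      (by intro a b; simp only [Bool.or_eq_true, decide_eq_true_eq]; omega) l
  have hsorted : ∀ j k : ℕ, j < k → (hk : k < asc.length) →
      ordKey (asc.getD j (0, false)) ≤ ordKey (asc.getD k (0, false)) := by
    intro j k hjk hk
    have hj : j < asc.length := lt_trans hjk hk
    rw [List.getD_eq_getElem _ _ hj, List.getD_eq_getElem _ _ hk]
    have := List.pairwise_iff_getElem.mp hpair j k hj hk hjk
    simpa using this
  -- count bound
  have hcount : asc.count (m, true) ≤ 1 := by
    rw [List.count_eq_countP, hperm.countP_eq]
    calc List.countP (fun p => p == (m, true)) l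
        ≤ List.countP (fun p => decide (p.1 = m) && p.2) l := by
          refine List.countP_mono_left (fun p _ hp => ?_)
          have : p = (m, true) := by simpa using hp
          subst this; simp
      _ ≤ 1 := by rw [List.countP_eq_length_filter]; exact hl.2.2 m
  -- no earlier part of the same size
  have hsame : ((List.range i).filter
      (fun j => decide ((asc.getD j (0, false)).1 = (asc.getD i (0, false)).1))) = [] := by
    rw [List.filter_eq_nil_iff]
    intro j hj
    simp only [decide_eq_true_eq]
    intro hsz
    have hji : j < i := List.mem_range.mp hj
    have hjlen : j < asc.length := lt_trans hji hi
    have hszm : (asc.getD j (0, false)).1 = m := by rw [hsz, hmov]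
    have h2 : (asc.getD j (0, false)).2 = true := by
      by_contra hb
      simp only [Bool.not_eq_true] at hb
      have hord := hsorted j i hji hi
      rw [hmov] at hord
      simp only [ordKey, hszm, hb] at hord
      simp at hord
    have hje : asc.getD j (0, false) = (m, true) := Prod.ext hszm h2
    -- two occurrences of (m, true)
    have hsub : List.Sublist [(m, true), (m, true)] asc := by
      have h1 : List.Sublist [(m, true)] (asc.take i) := by
        refine List.singleton_sublist.mpr ?_
        have hjt : j < (asc.take i).length := by
          rw [List.length_take]; omega
        have : (asc.take i)[j] = (m, true) := by
          rw [List.getElem_take]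
          rw [← List.getD_eq_getElem _ (0, false) hjlen]; exact hje
        rw [← this]; exact List.getElem_mem _
      have h2' : List.Sublist [(m, true)] (asc.drop i) := by
        refine List.singleton_sublist.mpr ?_
        have hit : 0 < (asc.drop i).length := by
          rw [List.length_drop]; omega
        have : (asc.drop i)[0] = (m, true) := by
          rw [List.getElem_drop]
          rw [← List.getD_eq_getElem _ (0, false) (by omega : i + 0 < asc.length)]
          simpa using hmov
        rw [← this]; exact List.getElem_mem _
      have := h1.append h2'
      simpa [List.take_append_drop] using this
    have := hsub.count_le (m, true)
    simp [List.count_cons] at this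
    omega
  -- contains
  have hcont : asc.contains ((asc.getD i (0, false)).1, true) = true := by
    simp only [List.contains, List.elem_iff]
    have : ((asc.getD i (0, false)).1, true) = asc.getD i (0, false) := by
      rw [hmov]
    rw [this, List.getD_eq_getElem _ _ hi]
    exact List.getElem_mem _
  -- the prev list
  set J := ((List.range i).filter
      (fun j => decide ((asc.getD j (0, false)).1 + 1 = (asc.getD i (0, false)).1))) with hJ
  set prev := J.map g with hprev
  have hJmem : ∀ j ∈ J, j < i := fun j hj => List.mem_range.mp (List.mem_filter.mp hj).1
  have hinj : ∀ x ∈ J, ∀ y ∈ J, g x = g y → x = y := by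
    have key : ∀ x ∈ J, ∀ y ∈ J, x < y → g x ≠ g y := by
      intro x hx y hy hxy
      have hylen : y < asc.length := lt_trans (hJmem y hy) hi
      have hgy := hg y hylen
      have hmemb : g x ∈ blockedMarks asc g y := by
        rw [blockedMarks]
        refine List.mem_append.mpr (Or.inl ?_)
        refine List.mem_map.mpr ⟨x, ?_, rfl⟩
        refine List.mem_filter.mpr ⟨List.mem_range.mpr hxy, ?_⟩
        have h1 := (List.mem_filter.mp hx).2
        have h2 := (List.mem_filter.mp hy).2
        simp only [decide_eq_true_eq] at h1 h2 ⊢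
        omega
      intro he
      rw [← he] at hgy
      exact (hgy ▸ mex1_not_mem (blockedMarks asc g y)) hmemb
    intro x hx y hy hxy
    rcases lt_trichotomy x y with h | h | h
    · exact absurd hxy (key x hx y hy h)
    · exact h
    · exact absurd hxy.symm (key y hy x hx h)
  have hnodup : prev.Nodup := List.Nodup.map_on hinj (List.Nodup.filter _ List.nodup_range)
  have hpos : ∀ x ∈ prev, 1 ≤ x := by
    intro x hx
    obtain ⟨j, hj, rfl⟩ := List.mem_map.mp hx
    rw [hg j (lt_trans (hJmem j hj) hi)]
    exact mex1_pos _
  have hone : 1 ∉ prev.erase (listMin prev) := by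
    by_cases h1 : 1 ∈ prev
    · have hne : prev ≠ [] := List.ne_nil_of_mem h1
      have hmin : listMin prev = 1 :=
        le_antisymm (listMin_le h1) (hpos _ (listMin_mem hne))
      rw [hmin]
      intro hc
      exact ((hnodup.mem_erase_iff).mp hc).1 rfl
    · intro hc
      exact h1 (List.erase_sublist.subset hc)
  -- conclude
  rw [hg i hi]
  refine mex1_eq_one ?_
  rw [blockedMarks]
  simp only [hsame, List.map_nil, List.nil_append, hcont, if_true]
  rw [← hJ]
  exact hone

/-- The Gordon marking of an overpartition is unique (on the positions of its parts),
it exists, and every overlined part receives mark 1. -/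
theorem gordonMarking_unique_and_overlined_mark_one
    (l : List (ℕ × Bool)) (hl : IsOverpartition l) :
    (∃ g : ℕ → ℕ, IsGordonMarkingOn (ascParts l) g) ∧
    (∀ g g' : ℕ → ℕ, IsGordonMarkingOn (ascParts l) g →
      IsGordonMarkingOn (ascParts l) g' →
      ∀ i < (ascParts l).length, g i = g' i) ∧
    (∀ g : ℕ → ℕ, IsGordonMarkingOn (ascParts l) g →
      ∀ i < (ascParts l).length, ((ascParts l).getD i (0, false)).2 = true → g i = 1) := by
  refine ⟨⟨gfun (ascParts l), gordon_exists _⟩,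
    fun g g' hg hg' => gordon_unique _ g g' hg hg',
    fun g hg i hi hov => gordon_overlined l hl g hg i hi hov⟩
end
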